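/- arXiv:2404.19125 — 5 statements merged into one kernel-verified Lean document; each statement's English description precedes it below -/
import Mathlib

section
/- Let r > 0 and let f : ℂ → ℂ be analytic on the open ball of radius r centered at 0 with f(0) = 0. Set y₀ := max(0, −(log r)/(2π)). Then the smooth function (x,y) ↦ f(e^{2πi(x+iy)}), defined on {(x,y) ∈ ℝ × ℝ : y > y₀}, belongs to the class 𝐡. -/
/-- Partial derivative in the first (`x`) variable. -/
noncomputable def pdX {E : Type*} [NormedAddCommGroup E] [NormedSpace ℝ E]
    (f : ℝ → ℝ → E) : ℝ → ℝ → E :=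
  fun x y => deriv (fun x' => f x' y) x

/-- Partial derivative in the second (`y`) variable. -/
noncomputable def pdY {E : Type*} [NormedAddCommGroup E] [NormedSpace ℝ E]
    (f : ℝ → ℝ → E) : ℝ → ℝ → E :=
  fun x y => deriv (fun y' => f x y') y

/-- The class 𝐡 of smooth functions on `{(x,y) | y > y₀}` all of whose iterated partial
derivatives `∂_x^r ∂_y^s f` decay like `e^{-π y}` as `y → ∞`, uniformly in `x`. -/
def InClassH {E : Type*} [NormedAddCommGroup E] [NormedSpace ℝ E]
    (y₀ : ℝ) (f : ℝ → ℝ → E) : Prop :=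
  ContDiffOn ℝ (⊤ : ℕ∞) (fun q : ℝ × ℝ => f q.1 q.2) {q : ℝ × ℝ | y₀ < q.2} ∧
  ∀ r s : ℕ, ∃ C : ℝ, 0 < C ∧ ∃ Y : ℝ, y₀ < Y ∧ ∀ x y : ℝ, Y ≤ y →
    ‖(pdX^[r] (pdY^[s] f)) x y‖ ≤ C * Real.exp (-Real.pi * y)

open Complex Filter

noncomputable def Efn (x y : ℝ) : ℂ :=
  Complex.exp (2 * Real.pi * Complex.I * ((x : ℂ) + (y : ℂ) * Complex.I))

lemma norm_Efn (x y : ℝ) : ‖Efn x y‖ = Real.exp (-(2 * Real.pi * y)) := by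
  rw [Efn, Complex.norm_exp]
  congr 1
  simp

lemma hasDerivAt_Efn_x (x y : ℝ) :
    HasDerivAt (fun x' : ℝ => Efn x' y) (Efn x y * (2 * Real.pi * Complex.I)) x := by
  have h1 : HasDerivAt (fun x' : ℝ => (x' : ℂ)) 1 x := by
    simpa using (hasDerivAt_id x).ofReal_comp
  have h2 : HasDerivAt
      (fun x' : ℝ => 2 * (Real.pi : ℂ) * Complex.I * ((x' : ℂ) + (y : ℂ) * Complex.I))
      (2 * (Real.pi : ℂ) * Complex.I) x := by
    simpa using (h1.add_const ((y : ℂ) * Complex.I)).const_mul (2 * (Real.pi : ℂ) * Complex.I)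
  simpa [Efn] using h2.cexp

lemma hasDerivAt_Efn_y (x y : ℝ) :
    HasDerivAt (fun y' : ℝ => Efn x y') (Efn x y * (-(2 * Real.pi))) y := by
  have h1 : HasDerivAt (fun y' : ℝ => (y' : ℂ)) 1 y := by
    simpa using (hasDerivAt_id y).ofReal_comp
  have h2 : HasDerivAt
      (fun y' : ℝ => 2 * (Real.pi : ℂ) * Complex.I * ((x : ℂ) + (y' : ℂ) * Complex.I))
      (-(2 * Real.pi)) y := by
    have := ((h1.mul_const Complex.I).const_add ((x : ℂ))).const_mul
      (2 * (Real.pi : ℂ) * Complex.I)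
    refine this.congr_deriv ?_
    simp [Complex.ext_iff]
  simpa [Efn] using h2.cexp

noncomputable def Dop (c : ℂ) (F : ℂ → ℂ) : ℂ → ℂ := fun w => c * w * deriv F w

lemma Dop_analytic {r : ℝ} {F : ℂ → ℂ} (hF : AnalyticOnNhd ℂ F (Metric.ball 0 r)) (c : ℂ) :
    AnalyticOnNhd ℂ (Dop c F) (Metric.ball 0 r) :=
  fun w hw => (analyticAt_const.mul (analyticAt_id)).mul (hF.deriv w hw)

lemma Dop_iter_analytic {r : ℝ} {F : ℂ → ℂ} (hF : AnalyticOnNhd ℂ F (Metric.ball 0 r))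
    (c : ℂ) (n : ℕ) : AnalyticOnNhd ℂ ((Dop c)^[n] F) (Metric.ball 0 r) := by
  induction n with
  | zero => exact hF
  | succ k ih => rw [Function.iterate_succ_apply']; exact Dop_analytic ih c

lemma Dop_iter_zero {F : ℂ → ℂ} (hF : F 0 = 0) (c : ℂ) (n : ℕ) : (Dop c)^[n] F 0 = 0 := by
  induction n with
  | zero => exact hF
  | succ k ih => rw [Function.iterate_succ_apply']; simp [Dop]

lemma deriv_comp_Efn_x {F : ℂ → ℂ} {x y : ℝ} (hF : DifferentiableAt ℂ F (Efn x y)) :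
    deriv (fun x' : ℝ => F (Efn x' y)) x = Dop (2 * Real.pi * Complex.I) F (Efn x y) := by
  have h := hF.hasDerivAt.comp x (hasDerivAt_Efn_x x y)
  have h2 : deriv (fun x' : ℝ => F (Efn x' y)) x
      = deriv F (Efn x y) * (Efn x y * (2 * Real.pi * Complex.I)) := h.deriv
  rw [h2, Dop]; ring

lemma deriv_comp_Efn_y {F : ℂ → ℂ} {x y : ℝ} (hF : DifferentiableAt ℂ F (Efn x y)) :
    deriv (fun y' : ℝ => F (Efn x y')) y = Dop (-(2 * Real.pi)) F (Efn x y) := by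
  have h := hF.hasDerivAt.comp y (hasDerivAt_Efn_y x y)
  have h2 : deriv (fun y' : ℝ => F (Efn x y')) y
      = deriv F (Efn x y) * (Efn x y * (-(2 * Real.pi))) := h.deriv
  rw [h2, Dop]; ring

lemma Efn_mem_ball {r : ℝ} (hr : 0 < r) {y : ℝ} (hy : -(Real.log r) / (2 * Real.pi) < y)
    (x : ℝ) : Efn x y ∈ Metric.ball (0 : ℂ) r := by
  rw [Metric.mem_ball, dist_zero_right, norm_Efn, ← Real.exp_log hr]
  apply Real.exp_lt_exp.2
  have hπ := Real.pi_pos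
  rw [div_lt_iff₀ (by positivity)] at hy
  nlinarith

lemma pdY_iter {r : ℝ} (hr : 0 < r) {f : ℂ → ℂ} (hf : AnalyticOnNhd ℂ f (Metric.ball 0 r))
    (s : ℕ) : ∀ x y : ℝ, -(Real.log r) / (2 * Real.pi) < y →
      pdY^[s] (fun x y => f (Efn x y)) x y = ((Dop (-(2 * Real.pi)))^[s] f) (Efn x y) := by
  induction s with
  | zero => intro x y _; simp
  | succ n ih =>
    intro x y hy
    rw [Function.iterate_succ_apply', Function.iterate_succ_apply']
    have hG := Dop_iter_analytic hf (-(2 * Real.pi)) n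
    have hev : (fun y' => pdY^[n] (fun x y => f (Efn x y)) x y')
        =ᶠ[nhds y] fun y' => ((Dop (-(2 * Real.pi)))^[n] f) (Efn x y') := by
      filter_upwards [eventually_gt_nhds hy] with y' hy' using ih x y' hy'
    show deriv (fun y' => pdY^[n] (fun x y => f (Efn x y)) x y') y = _
    rw [hev.deriv_eq]
    exact deriv_comp_Efn_y ((hG _ (Efn_mem_ball hr hy x)).differentiableAt)

lemma pdX_pdY_iter {r : ℝ} (hr : 0 < r) {f : ℂ → ℂ} (hf : AnalyticOnNhd ℂ f (Metric.ball 0 r))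
    (rr s : ℕ) : ∀ x y : ℝ, -(Real.log r) / (2 * Real.pi) < y →
      pdX^[rr] (pdY^[s] (fun x y => f (Efn x y))) x y
        = ((Dop (2 * Real.pi * Complex.I))^[rr] ((Dop (-(2 * Real.pi)))^[s] f)) (Efn x y) := by
  induction rr with
  | zero => exact pdY_iter hr hf s
  | succ n ih =>
    intro x y hy
    rw [Function.iterate_succ_apply', Function.iterate_succ_apply']
    have hG := Dop_iter_analytic (Dop_iter_analytic hf (-(2 * Real.pi)) s)
      (2 * Real.pi * Complex.I) n
    have hfn : (fun x' => pdX^[n] (pdY^[s] (fun x y => f (Efn x y))) x' y)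
        = fun x' => ((Dop (2 * Real.pi * Complex.I))^[n] ((Dop (-(2 * Real.pi)))^[s] f))
            (Efn x' y) := funext fun x' => ih x' y hy
    show deriv (fun x' => pdX^[n] (pdY^[s] (fun x y => f (Efn x y))) x' y) x = _
    rw [hfn]
    exact deriv_comp_Efn_x ((hG _ (Efn_mem_ball hr hy x)).differentiableAt)

lemma bound_near_zero {r : ℝ} (hr : 0 < r) {G : ℂ → ℂ}
    (hG : AnalyticOnNhd ℂ G (Metric.ball 0 r)) (hG0 : G 0 = 0) :
    ∃ C > 0, ∃ δ > 0, ∀ w : ℂ, ‖w‖ < δ → ‖G w‖ ≤ C * ‖w‖ := by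
  have h0 : (0 : ℂ) ∈ Metric.ball (0 : ℂ) r := by simp [hr]
  have hd : DifferentiableAt ℂ G 0 := (hG 0 h0).differentiableAt
  have hbo : (fun w : ℂ => G w) =O[nhds 0] fun w : ℂ => w := by
    simpa [hG0] using hd.isBigO_sub
  obtain ⟨C, hC, h⟩ := hbo.exists_pos
  rw [Asymptotics.isBigOWith_iff] at h
  obtain ⟨δ, hδ, hball⟩ := Metric.eventually_nhds_iff.1 h
  exact ⟨C, hC, δ, hδ, fun w hw => by
    simpa using hball (by simpa [dist_zero_right] using hw)⟩

lemma analyticOnNhd_Efn : AnalyticOnNhd ℝ (fun q : ℝ × ℝ => Efn q.1 q.2) Set.univ := by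
  intro q _
  have h1 : AnalyticAt ℝ (fun q : ℝ × ℝ => (q.1 : ℂ)) q :=
    (Complex.ofRealCLM.comp (ContinuousLinearMap.fst ℝ ℝ ℝ)).analyticAt q
  have h2 : AnalyticAt ℝ (fun q : ℝ × ℝ => (q.2 : ℂ)) q :=
    (Complex.ofRealCLM.comp (ContinuousLinearMap.snd ℝ ℝ ℝ)).analyticAt q
  have hinner : AnalyticAt ℝ
      (fun q : ℝ × ℝ => 2 * (Real.pi : ℂ) * Complex.I * ((q.1 : ℂ) + (q.2 : ℂ) * Complex.I))
      q := analyticAt_const.mul (h1.add (h2.mul analyticAt_const))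
  exact (analyticAt_cexp.restrictScalars).comp hinner

/-- if `f` is analytic on the ball of radius `r > 0` about `0` with `f 0 = 0`,
then `(x,y) ↦ f (e^{2πi(x+iy)})` belongs to the class 𝐡 on `{y > max(0, -(log r)/(2π))}`. -/
theorem analytic_vanishing_comp_in_class_h (r : ℝ) (hr : 0 < r) (f : ℂ → ℂ)
    (hf : AnalyticOnNhd ℂ f (Metric.ball 0 r)) (hf0 : f 0 = 0) :
    InClassH (max 0 (-(Real.log r) / (2 * Real.pi)))
      (fun x y : ℝ =>
        f (Complex.exp (2 * Real.pi * Complex.I * ((x : ℂ) + (y : ℂ) * Complex.I)))) := by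
  set c₀ : ℝ := max 0 (-(Real.log r) / (2 * Real.pi)) with hc₀
  have hmem : ∀ {y : ℝ}, c₀ < y → ∀ x : ℝ, Efn x y ∈ Metric.ball (0 : ℂ) r := by
    intro y hy x
    exact Efn_mem_ball hr (lt_of_le_of_lt (le_max_right _ _) hy) x
  constructor
  · -- smoothness
    have hAn : AnalyticOnNhd ℝ (fun q : ℝ × ℝ => f (Efn q.1 q.2)) {q : ℝ × ℝ | c₀ < q.2} := by
      intro q hq
      have hfr : AnalyticAt ℝ f (Efn q.1 q.2) := (hf _ (hmem hq q.1)).restrictScalars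
      exact AnalyticAt.comp (f := fun q : ℝ × ℝ => Efn q.1 q.2) hfr
        (analyticOnNhd_Efn q (Set.mem_univ q))
    have hopen : IsOpen {q : ℝ × ℝ | c₀ < q.2} := isOpen_lt continuous_const continuous_snd
    exact hAn.contDiffOn hopen.uniqueDiffOn
  · -- decay
    intro rr s
    set G : ℂ → ℂ := (Dop (2 * Real.pi * Complex.I))^[rr] ((Dop (-(2 * Real.pi)))^[s] f)
      with hGdef
    have hGa : AnalyticOnNhd ℂ G (Metric.ball 0 r) :=
      Dop_iter_analytic (Dop_iter_analytic hf (-(2 * Real.pi)) s) (2 * Real.pi * Complex.I) rr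
    have hG0 : G 0 = 0 := Dop_iter_zero (Dop_iter_zero hf0 (-(2 * Real.pi)) s)
      (2 * Real.pi * Complex.I) rr
    obtain ⟨C, hC, δ, hδ, hbd⟩ := bound_near_zero hr hGa hG0
    have hπ := Real.pi_pos
    refine ⟨C, hC, max (c₀ + 1) ((-Real.log δ) / (2 * Real.pi) + 1), ?_, ?_⟩
    · exact lt_of_lt_of_le (by linarith [le_max_left c₀ ((-(Real.log r)) / (2 * Real.pi))])
        (le_max_left _ _)
    · intro x y hy
      have hy1 : c₀ + 1 ≤ y := le_trans (le_max_left _ _) hy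
      have hy2 : (-Real.log δ) / (2 * Real.pi) + 1 ≤ y := le_trans (le_max_right _ _) hy
      have hyc : c₀ < y := by linarith
      have hy0 : 0 ≤ y := le_trans (le_max_left 0 _) (le_of_lt hyc)
      have hkey := pdX_pdY_iter hr hf rr s x y (lt_of_le_of_lt (le_max_right _ _) hyc)
      have hEq : pdX^[rr]
          (pdY^[s] (fun x y : ℝ =>
            f (Complex.exp (2 * Real.pi * Complex.I * ((x : ℂ) + (y : ℂ) * Complex.I))))) x y
          = G (Efn x y) := hkey
      rw [hEq]
      have hnorm : ‖Efn x y‖ = Real.exp (-(2 * Real.pi * y)) := norm_Efn x y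
      have hlt : ‖Efn x y‖ < δ := by
        rw [hnorm]
        have hδ' : δ = Real.exp (Real.log δ) := (Real.exp_log hδ).symm
        rw [hδ']
        apply Real.exp_lt_exp.2
        have h3 : -Real.log δ / (2 * Real.pi) < y := by linarith
        rw [div_lt_iff₀ (by positivity)] at h3
        nlinarith
      calc ‖G (Efn x y)‖ ≤ C * ‖Efn x y‖ := hbd _ hlt
        _ = C * Real.exp (-(2 * Real.pi * y)) := by rw [hnorm]
        _ ≤ C * Real.exp (-Real.pi * y) := by
            apply mul_le_mul_of_nonneg_left _ (le_of_lt hC)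
            apply Real.exp_le_exp.2
            nlinarith
end

section
/- Let V be a finite-dimensional complex vector space, Q : V × V → ℂ a bilinear form, and T : V → V a linear map such that T − id is nilpotent and Q(Tu, Tv) = Q(u, v) for all u, v ∈ V. Define N := Σ_{k=1}^{dim V} ((−1)^{k−1}/k)·(T − id)^k (the logarithm of the unipotent operator T; a finite sum). Then Q(Nu, v) + Q(u, Nv) = 0 for all u, v ∈ V; that is, N is an infinitesimal isometry of Q. -/
open Polynomial Finset

lemma descPoch_eval_neg_one (n : ℕ) :
    (descPochhammer ℂ n).eval (-1) = (-1) ^ n * n.factorial := by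
  induction n with
  | zero => simp
  | succ n ih =>
      rw [descPochhammer_succ_right, eval_mul, ih, Nat.factorial_succ]
      simp only [eval_sub, eval_X, eval_natCast]
      push_cast
      ring

lemma descPoch_coeff_one (k : ℕ) :
    (descPochhammer ℂ (k + 1)).coeff 1 = (-1) ^ k * k.factorial := by
  rw [descPochhammer_succ_left, coeff_X_mul, coeff_zero_eq_eval_zero, eval_comp]
  simp [descPoch_eval_neg_one]

lemma coeff_one_mul' (p q : Polynomial ℂ) :
    (p * q).coeff 1 = p.coeff 0 * q.coeff 1 + p.coeff 1 * q.coeff 0 := by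
  rw [Polynomial.coeff_mul]
  rw [show Finset.HasAntidiagonal.antidiagonal 1 = {(0,1),(1,0)} from rfl]
  simp



/-- if `T` is a unipotent linear operator preserving a bilinear form `Q` on a
finite-dimensional complex vector space, then its logarithm
`N = Σ_{k=1}^{dim V} ((-1)^{k-1}/k) • (T - 1)^k` is an infinitesimal isometry of `Q`. -/
theorem log_of_unipotent_isometry_is_infinitesimal_isometry
    (V : Type*) [AddCommGroup V] [Module ℂ V] [FiniteDimensional ℂ V]
    (Q : V →ₗ[ℂ] V →ₗ[ℂ] ℂ) (T : Module.End ℂ V)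
    (hnil : IsNilpotent (T - 1))
    (hiso : ∀ u v : V, Q (T u) (T v) = Q u v)
    (N : Module.End ℂ V)
    (hN : N = ∑ k ∈ Finset.Icc 1 (Module.finrank ℂ V),
        ((-1 : ℂ) ^ (k - 1) / (k : ℂ)) • (T - 1) ^ k) :
    ∀ u v : V, Q (N u) v + Q u (N v) = 0 := by
  intro u v
  set d := Module.finrank ℂ V with hd
  set E := T - 1 with hE
  have hEd : E ^ d = 0 := by
    have h1 := LinearMap.aeval_self_charpoly E
    rw [hnil.charpoly_eq_X_pow_finrank] at h1
    simpa using h1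
  have hEj : ∀ j, d < j → E ^ j = 0 := fun j hj => pow_eq_zero_of_le hj.le hEd
  have hT : T = 1 + E := by rw [hE]; abel
  have hTm : ∀ m : ℕ, T ^ m = ∑ j ∈ Finset.range (d+1), (m.choose j : ℂ) • E ^ j := by
    intro m
    have h1 : T ^ m = ∑ j ∈ Finset.range (m+1), (m.choose j : ℂ) • E ^ j := by
      rw [hT, add_comm (1 : Module.End ℂ V) E, Commute.add_pow (Commute.one_right E)]
      apply Finset.sum_congr rfl
      intro j hj
      rw [one_pow, mul_one, Nat.cast_smul_eq_nsmul, nsmul_eq_mul,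
        (Nat.cast_commute (m.choose j) (E ^ j)).eq]
    have h2 : ∑ j ∈ Finset.range (m+1), (m.choose j : ℂ) • E ^ j
        = ∑ j ∈ Finset.range (m+d+2), (m.choose j : ℂ) • E ^ j := by
      apply Finset.sum_subset (Finset.range_subset_range.2 (by omega))
      intro j _ hj
      have : m < j := by simpa using hj
      simp [Nat.choose_eq_zero_of_lt this]
    have h3 : ∑ j ∈ Finset.range (d+1), (m.choose j : ℂ) • E ^ j
        = ∑ j ∈ Finset.range (m+d+2), (m.choose j : ℂ) • E ^ j := by
      apply Finset.sum_subset (Finset.range_subset_range.2 (by omega))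
      intro j _ hj
      have : d < j := by simpa using hj
      simp [hEj j this]
    rw [h1, h2, ← h3]
  have hQm : ∀ m : ℕ, Q ((T ^ m) u) ((T ^ m) v) = Q u v := by
    intro m
    induction m with
    | zero => simp
    | succ m ih =>
        rw [pow_succ']
        simp only [Module.End.mul_apply]
        rw [hiso, ih]
  set c : ℕ → Polynomial ℂ := fun j => Polynomial.C ((j.factorial : ℂ)⁻¹) * descPochhammer ℂ j
    with hc
  set P : Polynomial ℂ := ∑ j ∈ Finset.range (d+1), ∑ k ∈ Finset.range (d+1),
      Polynomial.C (Q ((E ^ j) u) ((E ^ k) v)) * (c j * c k) with hP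
  have hceval : ∀ j (m : ℕ), (c j).eval (m : ℂ) = (m.choose j : ℂ) := by
    intro j m
    rw [hc]
    simp only [eval_mul, eval_C, descPochhammer_eval_eq_descFactorial,
      Nat.descFactorial_eq_factorial_mul_choose]
    push_cast
    rw [← mul_assoc, inv_mul_cancel₀ (by exact_mod_cast j.factorial_ne_zero), one_mul]
  have hPeval : ∀ m : ℕ, P.eval (m : ℂ) = Q u v := by
    intro m
    have expand : Q ((T ^ m) u) ((T ^ m) v) = ∑ j ∈ Finset.range (d+1), ∑ k ∈ Finset.range (d+1),
        Q ((E ^ j) u) ((E ^ k) v) * ((m.choose j : ℂ) * (m.choose k : ℂ)) := by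
      rw [hTm m]
      simp only [LinearMap.sum_apply, LinearMap.smul_apply, map_sum, map_smul,
        LinearMap.smul_apply, smul_eq_mul, Finset.sum_apply]
      rw [Finset.sum_comm]
      apply Finset.sum_congr rfl
      intro j _
      rw [Finset.mul_sum]
      apply Finset.sum_congr rfl
      intro k _
      ring
    rw [← hQm m, expand, hP]
    rw [eval_finset_sum]
    apply Finset.sum_congr rfl
    intro j _
    rw [eval_finset_sum]
    apply Finset.sum_congr rfl
    intro k _
    rw [eval_mul, eval_C, eval_mul, hceval, hceval]
  have hPC : P = Polynomial.C (Q u v) := by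
    apply eq_of_infinite_eval_eq
    exact Set.infinite_of_injective_forall_mem (f := (Nat.cast : ℕ → ℂ))
      Nat.cast_injective (fun m => by simp [hPeval m])
  have h1 : P.coeff 1 = 0 := by rw [hPC, coeff_C]; simp
  have hc0 : ∀ j, (c j).coeff 0 = if j = 0 then 1 else 0 := by
    intro j
    simp only [hc]
    rw [coeff_C_mul, coeff_zero_eq_eval_zero, descPochhammer_eval_zero]
    split_ifs with h
    · subst h; simp
    · simp
  have hc1 : ∀ j, (c j).coeff 1 = if j = 0 then 0 else (-1 : ℂ) ^ (j - 1) / j := by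
    intro j
    simp only [hc]
    rw [coeff_C_mul]
    cases j with
    | zero => simp [descPochhammer_zero, Polynomial.coeff_one]
    | succ k =>
        rw [descPoch_coeff_one, if_neg (Nat.succ_ne_zero k), Nat.succ_sub_one,
          Nat.factorial_succ]
        have hk : ((k.factorial : ℂ)) ≠ 0 := by exact_mod_cast k.factorial_ne_zero
        have hk1 : ((k : ℂ) + 1) ≠ 0 := by
          have : ((k + 1 : ℕ) : ℂ) ≠ 0 := Nat.cast_ne_zero.mpr (Nat.succ_ne_zero k)
          push_cast at this
          exact this
        push_cast
        field_simp
  have hrange : Finset.range (d+1) = insert 0 (Finset.Icc 1 d) := by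
    ext x; simp; omega
  have h0no : (0 : ℕ) ∉ Finset.Icc 1 d := by simp
  have hcoeffP : P.coeff 1 = (∑ k ∈ Finset.Icc 1 d, ((-1:ℂ)^(k-1)/k) * Q u ((E^k) v))
      + (∑ j ∈ Finset.Icc 1 d, ((-1:ℂ)^(j-1)/j) * Q ((E^j) u) v) := by
    rw [hP]
    simp only [finset_sum_coeff, coeff_C_mul, coeff_one_mul', hc0, hc1]
    rw [hrange, Finset.sum_insert h0no, Finset.sum_insert h0no]
    have t00 : (Q ((E ^ 0) u)) ((E ^ 0) v) *
          (((if (0:ℕ) = 0 then (1:ℂ) else 0) * if (0:ℕ) = 0 then (0:ℂ) else (-1) ^ (0 - 1) / (↑(0:ℕ)) ) +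
            (if (0:ℕ) = 0 then (0:ℂ) else (-1) ^ (0 - 1) / (↑(0:ℕ))) * if (0:ℕ) = 0 then (1:ℂ) else 0) = 0 := by
      simp
    have s1 : ∑ x ∈ Finset.Icc 1 d,
          (Q ((E ^ 0) u)) ((E ^ x) v) *
            (((if (0:ℕ) = 0 then (1:ℂ) else 0) * if x = 0 then (0:ℂ) else (-1) ^ (x - 1) / ↑x) +
              (if (0:ℕ) = 0 then (0:ℂ) else (-1) ^ (0 - 1) / (↑(0:ℕ))) * if x = 0 then (1:ℂ) else 0)
        = ∑ k ∈ Finset.Icc 1 d, (-1) ^ (k - 1) / ↑k * (Q u) ((E ^ k) v) := by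
      apply Finset.sum_congr rfl
      intro x hx
      have hx0 : x ≠ 0 := by
        rw [Finset.mem_Icc] at hx
        omega
      simp [hx0]
      ring
    have s2 : ∑ x ∈ Finset.Icc 1 d,
        ∑ x1 ∈ insert 0 (Finset.Icc 1 d),
          (Q ((E ^ x) u)) ((E ^ x1) v) *
            (((if x = 0 then (1:ℂ) else 0) * if x1 = 0 then (0:ℂ) else (-1) ^ (x1 - 1) / ↑x1) +
              (if x = 0 then (0:ℂ) else (-1) ^ (x - 1) / ↑x) * if x1 = 0 then (1:ℂ) else 0)
        = ∑ j ∈ Finset.Icc 1 d, (-1) ^ (j - 1) / ↑j * (Q ((E ^ j) u)) v := by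
      apply Finset.sum_congr rfl
      intro x hx
      have hx0 : x ≠ 0 := by
        rw [Finset.mem_Icc] at hx
        omega
      rw [Finset.sum_insert h0no]
      have inner : ∑ x1 ∈ Finset.Icc 1 d,
          (Q ((E ^ x) u)) ((E ^ x1) v) *
            (((if x = 0 then (1:ℂ) else 0) * if x1 = 0 then (0:ℂ) else (-1) ^ (x1 - 1) / ↑x1) +
              (if x = 0 then (0:ℂ) else (-1) ^ (x - 1) / ↑x) * if x1 = 0 then (1:ℂ) else 0) = 0 := by
        apply Finset.sum_eq_zero
        intro y hy
        have hy0 : y ≠ 0 := by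
          rw [Finset.mem_Icc] at hy
          omega
        simp [hx0, hy0]
      rw [inner, add_zero]
      simp [hx0]
      ring
    rw [t00, zero_add, s1, s2]
  have hNQ1 : Q (N u) v = ∑ j ∈ Finset.Icc 1 d, ((-1:ℂ)^(j-1)/(j:ℂ)) * Q ((E^j) u) v := by
    rw [hN]
    simp [LinearMap.sum_apply, LinearMap.smul_apply, Finset.sum_apply, smul_eq_mul]
  have hNQ2 : Q u (N v) = ∑ k ∈ Finset.Icc 1 d, ((-1:ℂ)^(k-1)/(k:ℂ)) * Q u ((E^k) v) := by
    rw [hN]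
    simp [map_sum, map_smul, smul_eq_mul]
  rw [hNQ1, hNQ2, add_comm, ← hcoeffP]
  exact h1
end

section
/- Let c > 0, y₀ ∈ ℝ, and let h be a real-valued function in the class 𝐡 on {(x,y) : y > y₀}. Set F := c + h. Then there exists Y > y₀ such that F(x,y) > c/2 for all x ∈ ℝ and all y ≥ Y, and the function (x,y) ↦ ((∂_x² + ∂_y²) log F)(x,y), restricted to {(x,y) : y > Y}, belongs to the class 𝐡. -/
open Function Set Filter

noncomputable def Dv (v : ℝ × ℝ) (u : ℝ × ℝ → ℝ) : ℝ × ℝ → ℝ := fun q => fderiv ℝ u q v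

def UU (Y : ℝ) : Set (ℝ × ℝ) := {q : ℝ × ℝ | Y < q.2}





lemma isOpen_UU (Y : ℝ) : IsOpen (UU Y) := isOpen_lt continuous_const continuous_snd

lemma uniqueDiffOn_UU (Y : ℝ) : UniqueDiffOn ℝ (UU Y) := (isOpen_UU Y).uniqueDiffOn

lemma mem_UU_nhds {Y : ℝ} {q : ℝ × ℝ} (hq : q ∈ UU Y) : UU Y ∈ nhds q :=
  (isOpen_UU Y).mem_nhds hq

lemma Dv_contDiffOn {Y : ℝ} {v : ℝ × ℝ} {u : ℝ × ℝ → ℝ}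
    (hu : ContDiffOn ℝ (⊤ : ℕ∞) u (UU Y)) : ContDiffOn ℝ (⊤ : ℕ∞) (Dv v u) (UU Y) := by
  unfold Dv
  exact (hu.fderiv_of_isOpen (isOpen_UU Y) (by simp)).clm_apply contDiffOn_const

lemma Dv_iter_contDiffOn {Y : ℝ} {v : ℝ × ℝ} {u : ℝ × ℝ → ℝ}
    (hu : ContDiffOn ℝ (⊤ : ℕ∞) u (UU Y)) (k : ℕ) : ContDiffOn ℝ (⊤ : ℕ∞) ((Dv v)^[k] u) (UU Y) := by
  induction k with
  | zero => exact hu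
  | succ k ih => rw [Function.iterate_succ_apply']; exact Dv_contDiffOn ih

lemma norm_iFD_Dv {Y : ℝ} {v : ℝ × ℝ} {u : ℝ × ℝ → ℝ}
    (hu : ContDiffOn ℝ (⊤ : ℕ∞) u (UU Y)) {q : ℝ × ℝ} (hq : q ∈ UU Y) (n : ℕ) :
    ‖iteratedFDeriv ℝ n (Dv v u) q‖ ≤ ‖v‖ * ‖iteratedFDeriv ℝ (n + 1) u q‖ := by
  have h1 : iteratedFDeriv ℝ n (Dv v u) q
      = iteratedFDerivWithin ℝ n (Dv v u) (UU Y) q :=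
    (iteratedFDerivWithin_of_isOpen n (isOpen_UU Y) hq).symm
  have h2 : iteratedFDerivWithin ℝ n (Dv v u) (UU Y) q
      = iteratedFDerivWithin ℝ n (fun p => fderivWithin ℝ u (UU Y) p v) (UU Y) q := by
    refine (iteratedFDerivWithin_congr (fun p hp => ?_) hq n).symm
    unfold Dv
    rw [fderivWithin_of_isOpen (isOpen_UU Y) hp]
  have h3 := norm_iteratedFDerivWithin_clm_apply_const
    (f := fderivWithin ℝ u (UU Y)) (c := v) (s := UU Y) (x := q) (N := ((⊤ : ℕ∞) : WithTop ℕ∞)) (n := n)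
    ((hu.fderivWithin (uniqueDiffOn_UU Y) (m := (⊤ : ℕ∞)) (by simp)) q hq) (uniqueDiffOn_UU Y) hq (by exact_mod_cast le_top)
  rw [h1, h2]
  refine h3.trans ?_
  rw [norm_iteratedFDerivWithin_fderivWithin (uniqueDiffOn_UU Y) hq,
    iteratedFDerivWithin_of_isOpen _ (isOpen_UU Y) hq]

lemma norm_iFD_Dv_iter {Y : ℝ} {v : ℝ × ℝ} (hv : ‖v‖ ≤ 1) {u : ℝ × ℝ → ℝ}
    (hu : ContDiffOn ℝ (⊤ : ℕ∞) u (UU Y)) {q : ℝ × ℝ} (hq : q ∈ UU Y) (k : ℕ) :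
    ∀ (n : ℕ) (u : ℝ × ℝ → ℝ), ContDiffOn ℝ (⊤ : ℕ∞) u (UU Y) →
      ‖iteratedFDeriv ℝ n ((Dv v)^[k] u) q‖ ≤ ‖iteratedFDeriv ℝ (n + k) u q‖ := by
  clear hu u
  induction k with
  | zero => intro n u hu; simp
  | succ k ih =>
    intro n u hu
    rw [Function.iterate_succ_apply]
    refine (ih n (Dv v u) (Dv_contDiffOn hu)).trans ?_
    have := norm_iFD_Dv (v := v) hu hq (n + k)
    calc ‖iteratedFDeriv ℝ (n + k) (Dv v u) q‖
        ≤ ‖v‖ * ‖iteratedFDeriv ℝ (n + k + 1) u q‖ := this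
      _ ≤ 1 * ‖iteratedFDeriv ℝ (n + k + 1) u q‖ := by
          apply mul_le_mul_of_nonneg_right hv (norm_nonneg _)
      _ = ‖iteratedFDeriv ℝ (n + (k + 1)) u q‖ := by rw [one_mul, Nat.add_assoc]

section part2

lemma pdX_eq {Y : ℝ} {u : ℝ × ℝ → ℝ} {f : ℝ → ℝ → ℝ}
    (hu : ContDiffOn ℝ (⊤ : ℕ∞) u (UU Y)) (hf : ∀ q ∈ UU Y, f q.1 q.2 = u q)
    {x y : ℝ} (hy : Y < y) : pdX f x y = Dv (1, 0) u (x, y) := by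
  have hmem : (x, y) ∈ UU Y := hy
  have hdiff : HasFDerivAt u (fderiv ℝ u (x, y)) (x, y) :=
    (((hu.contDiffAt (mem_UU_nhds hmem)).differentiableAt (by simp)).hasFDerivAt)
  have hcurve : HasDerivAt (fun x' : ℝ => (x', y)) ((1 : ℝ), (0 : ℝ)) x :=
    (hasDerivAt_id x).prodMk (hasDerivAt_const x y)
  have key : HasDerivAt (fun x' : ℝ => u (x', y)) (fderiv ℝ u (x, y) (1, 0)) x :=
    hdiff.comp_hasDerivAt x hcurve
  have : (fun x' : ℝ => f x' y) = fun x' : ℝ => u (x', y) := by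
    funext x'; exact hf (x', y) hy
  show deriv (fun x' => f x' y) x = _
  rw [this, key.deriv]; rfl

lemma pdY_eq {Y : ℝ} {u : ℝ × ℝ → ℝ} {f : ℝ → ℝ → ℝ}
    (hu : ContDiffOn ℝ (⊤ : ℕ∞) u (UU Y)) (hf : ∀ q ∈ UU Y, f q.1 q.2 = u q)
    {x y : ℝ} (hy : Y < y) : pdY f x y = Dv (0, 1) u (x, y) := by
  have hmem : (x, y) ∈ UU Y := hy
  have hdiff : HasFDerivAt u (fderiv ℝ u (x, y)) (x, y) :=
    (((hu.contDiffAt (mem_UU_nhds hmem)).differentiableAt (by simp)).hasFDerivAt)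
  have hcurve : HasDerivAt (fun y' : ℝ => (x, y')) ((0 : ℝ), (1 : ℝ)) y :=
    (hasDerivAt_const y x).prodMk (hasDerivAt_id y)
  have key : HasDerivAt (fun y' : ℝ => u (x, y')) (fderiv ℝ u (x, y) (0, 1)) y :=
    hdiff.comp_hasDerivAt y hcurve
  have heq : (fun y' : ℝ => f x y') =ᶠ[nhds y] fun y' : ℝ => u (x, y') := by
    filter_upwards [isOpen_Ioi.mem_nhds (show y ∈ Ioi Y from hy)] with y' hy'
    exact hf (x, y') hy'
  show deriv (fun y' => f x y') y = _
  rw [heq.deriv_eq, key.deriv]; rfl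

lemma pdY_iter_eq {Y : ℝ} {u : ℝ × ℝ → ℝ} {f : ℝ → ℝ → ℝ}
    (hu : ContDiffOn ℝ (⊤ : ℕ∞) u (UU Y)) (hf : ∀ q ∈ UU Y, f q.1 q.2 = u q) (s : ℕ) :
    ∀ q ∈ UU Y, (pdY^[s] f) q.1 q.2 = ((Dv (0, 1))^[s] u) q := by
  induction s with
  | zero => exact hf
  | succ s ih =>
    intro q hq
    rw [Function.iterate_succ_apply', Function.iterate_succ_apply']
    have := pdY_eq (Dv_iter_contDiffOn hu s) ih (x := q.1) (y := q.2) hq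
    simpa using this

lemma pdXY_iter_eq {Y : ℝ} {u : ℝ × ℝ → ℝ} {f : ℝ → ℝ → ℝ}
    (hu : ContDiffOn ℝ (⊤ : ℕ∞) u (UU Y)) (hf : ∀ q ∈ UU Y, f q.1 q.2 = u q) (r s : ℕ) :
    ∀ q ∈ UU Y, (pdX^[r] (pdY^[s] f)) q.1 q.2 = ((Dv (1, 0))^[r] ((Dv (0, 1))^[s] u)) q := by
  induction r with
  | zero => simpa using pdY_iter_eq hu hf s
  | succ r ih =>
    intro q hq
    rw [Function.iterate_succ_apply', Function.iterate_succ_apply']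
    have := pdX_eq (Dv_iter_contDiffOn (Dv_iter_contDiffOn hu s) r) ih
      (x := q.1) (y := q.2) hq
    simpa using this

lemma Dv_congr {Y : ℝ} {v : ℝ × ℝ} {w₁ w₂ : ℝ × ℝ → ℝ}
    (hw : ∀ p ∈ UU Y, w₁ p = w₂ p) {q : ℝ × ℝ} (hq : q ∈ UU Y) :
    Dv v w₁ q = Dv v w₂ q := by
  unfold Dv
  have : w₁ =ᶠ[nhds q] w₂ := by filter_upwards [mem_UU_nhds hq] with p hp using hw p hp
  rw [this.fderiv_eq]

lemma Dv_iter_congr {Y : ℝ} {v : ℝ × ℝ} {w₁ w₂ : ℝ × ℝ → ℝ}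
    (hw : ∀ p ∈ UU Y, w₁ p = w₂ p) (k : ℕ) :
    ∀ q ∈ UU Y, (Dv v)^[k] w₁ q = (Dv v)^[k] w₂ q := by
  induction k with
  | zero => exact hw
  | succ k ih =>
    intro q hq
    rw [Function.iterate_succ_apply', Function.iterate_succ_apply']
    exact Dv_congr ih hq

lemma Dv_comm {Y : ℝ} {u : ℝ × ℝ → ℝ} (hu : ContDiffOn ℝ (⊤ : ℕ∞) u (UU Y))
    {q : ℝ × ℝ} (hq : q ∈ UU Y) (a b : ℝ × ℝ) :
    Dv a (Dv b u) q = Dv b (Dv a u) q := by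
  have hat : ContDiffAt ℝ (⊤ : ℕ∞) u q := hu.contDiffAt (mem_UU_nhds hq)
  have hdf : DifferentiableAt ℝ (fderiv ℝ u) q :=
    (hat.fderiv_right (m := (⊤ : ℕ∞)) (by simp)).differentiableAt (by simp)
  have key : ∀ w c : ℝ × ℝ, Dv w (Dv c u) q = fderiv ℝ (fderiv ℝ u) q w c := by
    intro w c
    show fderiv ℝ (fun p => fderiv ℝ u p c) q w = _
    rw [fderiv_clm_apply hdf (differentiableAt_const c)]
    simp
  rw [key a b, key b a]
  exact (hat.isSymmSndFDerivAt (by rw [minSmoothness_of_isRCLikeNormedField]; exact WithTop.coe_le_coe.2 le_top)).eq a b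

lemma Dv_swap_iter {Y : ℝ} {u : ℝ × ℝ → ℝ} (hu : ContDiffOn ℝ (⊤ : ℕ∞) u (UU Y))
    (a b : ℝ × ℝ) (s : ℕ) :
    ∀ q ∈ UU Y, (Dv b)^[s] (Dv a u) q = Dv a ((Dv b)^[s] u) q := by
  induction s generalizing u with
  | zero => intro q _; rfl
  | succ s ih =>
    intro q hq
    rw [Function.iterate_succ_apply, Function.iterate_succ_apply]
    calc (Dv b)^[s] (Dv b (Dv a u)) q
        = (Dv b)^[s] (Dv a (Dv b u)) q :=
          Dv_iter_congr (fun p hp => Dv_comm hu hp b a) s q hq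
      _ = Dv a ((Dv b)^[s] (Dv b u)) q := ih (Dv_contDiffOn hu) q hq

end part2
section part3

lemma norm_smul_const_iFDW {Y : ℝ} {φ : ℝ × ℝ → ℝ} (hφ : ContDiffOn ℝ (⊤ : ℕ∞) φ (UU Y))
    (L : (ℝ × ℝ) →L[ℝ] ℝ) (hL : ‖L‖ ≤ 1) {q : ℝ × ℝ} (hq : q ∈ UU Y) (n : ℕ) :
    ‖iteratedFDerivWithin ℝ n (fun p => φ p • L) (UU Y) q‖ ≤
      ‖iteratedFDerivWithin ℝ n φ (UU Y) q‖ := by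
  have hcomp : (fun p => φ p • L) = (ContinuousLinearMap.toSpanSingleton ℝ L) ∘ φ := rfl
  rw [hcomp, (ContinuousLinearMap.toSpanSingleton ℝ L).iteratedFDerivWithin_comp_left
    (hφ q hq) (uniqueDiffOn_UU Y) hq (i := n) (by exact_mod_cast le_top)]
  refine ((ContinuousLinearMap.toSpanSingleton ℝ L).norm_compContinuousMultilinearMap_le
    _).trans ?_
  rw [ContinuousLinearMap.norm_toSpanSingleton]
  exact mul_le_of_le_one_left (norm_nonneg _) hL

lemma norm_fst_le_one : ‖ContinuousLinearMap.fst ℝ ℝ ℝ‖ ≤ 1 := by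
  refine ContinuousLinearMap.opNorm_le_bound _ zero_le_one fun v => ?_
  rw [one_mul]
  exact norm_fst_le v

lemma norm_snd_le_one : ‖ContinuousLinearMap.snd ℝ ℝ ℝ‖ ≤ 1 := by
  refine ContinuousLinearMap.opNorm_le_bound _ zero_le_one fun v => ?_
  rw [one_mul]
  exact norm_snd_le v

lemma key_ineq {Y : ℝ} {u : ℝ × ℝ → ℝ} (hu : ContDiffOn ℝ (⊤ : ℕ∞) u (UU Y))
    {q : ℝ × ℝ} (hq : q ∈ UU Y) (n : ℕ) :
    ‖iteratedFDeriv ℝ (n + 1) u q‖ ≤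
      ‖iteratedFDeriv ℝ n (Dv (1, 0) u) q‖ + ‖iteratedFDeriv ℝ n (Dv (0, 1) u) q‖ := by
  set l1 : (ℝ × ℝ) →L[ℝ] ℝ := ContinuousLinearMap.fst ℝ ℝ ℝ
  set l2 : (ℝ × ℝ) →L[ℝ] ℝ := ContinuousLinearMap.snd ℝ ℝ ℝ
  have hDv1 := Dv_contDiffOn (v := (1, 0)) hu
  have hDv2 := Dv_contDiffOn (v := (0, 1)) hu
  have e0 : ‖iteratedFDeriv ℝ (n + 1) u q‖
      = ‖iteratedFDerivWithin ℝ n (fderivWithin ℝ u (UU Y)) (UU Y) q‖ := by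
    rw [norm_iteratedFDerivWithin_fderivWithin (uniqueDiffOn_UU Y) hq,
      iteratedFDerivWithin_of_isOpen _ (isOpen_UU Y) hq]
  have e1 : iteratedFDerivWithin ℝ n (fderivWithin ℝ u (UU Y)) (UU Y) q
      = iteratedFDerivWithin ℝ n (fun p => Dv (1, 0) u p • l1 + Dv (0, 1) u p • l2)
          (UU Y) q := by
    refine iteratedFDerivWithin_congr (fun p hp => ?_) hq n
    rw [fderivWithin_of_isOpen (isOpen_UU Y) hp]
    refine ContinuousLinearMap.ext fun v => ?_
    have : v = v.1 • ((1 : ℝ), (0 : ℝ)) + v.2 • ((0 : ℝ), (1 : ℝ)) := by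
      simp [Prod.ext_iff]
    conv_lhs => rw [this]
    rw [map_add, map_smul, map_smul]
    simp [Dv, l1, l2]
    ring
  have e2 : iteratedFDerivWithin ℝ n (fun p => Dv (1, 0) u p • l1 + Dv (0, 1) u p • l2)
        (UU Y) q
      = iteratedFDerivWithin ℝ n (fun p => Dv (1, 0) u p • l1) (UU Y) q
        + iteratedFDerivWithin ℝ n (fun p => Dv (0, 1) u p • l2) (UU Y) q := by
    exact iteratedFDerivWithin_add_apply' (((hDv1.smul contDiffOn_const).of_le (by exact_mod_cast le_top)) q hq)
      (((hDv2.smul contDiffOn_const).of_le (by exact_mod_cast le_top)) q hq) (uniqueDiffOn_UU Y) hq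
  rw [e0, e1, e2]
  refine (norm_add_le _ _).trans ?_
  have b1 := norm_smul_const_iFDW hDv1 l1 norm_fst_le_one hq n
  have b2 := norm_smul_const_iFDW hDv2 l2 norm_snd_le_one hq n
  have c1 : ‖iteratedFDerivWithin ℝ n (Dv (1, 0) u) (UU Y) q‖
      = ‖iteratedFDeriv ℝ n (Dv (1, 0) u) q‖ := by
    rw [iteratedFDerivWithin_of_isOpen _ (isOpen_UU Y) hq]
  have c2 : ‖iteratedFDerivWithin ℝ n (Dv (0, 1) u) (UU Y) q‖
      = ‖iteratedFDeriv ℝ n (Dv (0, 1) u) q‖ := by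
    rw [iteratedFDerivWithin_of_isOpen _ (isOpen_UU Y) hq]
  rw [c1] at b1; rw [c2] at b2
  exact add_le_add b1 b2

/-- Decay of all full iterated derivatives from decay of all `X`-then-`Y` iterated
directional derivatives. -/
lemma iFD_decay {Y : ℝ} (n : ℕ) : ∀ (u : ℝ × ℝ → ℝ), ContDiffOn ℝ (⊤ : ℕ∞) u (UU Y) →
    (∀ r s : ℕ, ∃ C : ℝ, 0 < C ∧ ∃ Y' : ℝ, Y < Y' ∧ ∀ q : ℝ × ℝ, Y' ≤ q.2 →
      ‖((Dv (1, 0))^[r] ((Dv (0, 1))^[s] u)) q‖ ≤ C * Real.exp (-Real.pi * q.2)) →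
    ∃ C : ℝ, 0 < C ∧ ∃ Y' : ℝ, Y < Y' ∧ ∀ q : ℝ × ℝ, Y' ≤ q.2 →
      ‖iteratedFDeriv ℝ n u q‖ ≤ C * Real.exp (-Real.pi * q.2) := by
  induction n with
  | zero =>
    intro u hu hb
    obtain ⟨C, hC, Y', hY', hbd⟩ := hb 0 0
    exact ⟨C, hC, Y', hY', fun q hq => by simpa [norm_iteratedFDeriv_zero] using hbd q hq⟩
  | succ n ih =>
    intro u hu hb
    have hb1 : ∀ r s : ℕ, ∃ C : ℝ, 0 < C ∧ ∃ Y' : ℝ, Y < Y' ∧ ∀ q : ℝ × ℝ, Y' ≤ q.2 →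
        ‖((Dv (1, 0))^[r] ((Dv (0, 1))^[s] (Dv (1, 0) u))) q‖
          ≤ C * Real.exp (-Real.pi * q.2) := by
      intro r s
      obtain ⟨C, hC, Y', hY', hbd⟩ := hb (r + 1) s
      refine ⟨C, hC, Y', hY', fun q hq => ?_⟩
      have hqU : q ∈ UU Y := lt_of_lt_of_le hY' hq
      have e : ((Dv (1, 0))^[r] ((Dv (0, 1))^[s] (Dv (1, 0) u))) q
          = ((Dv (1, 0))^[r + 1] ((Dv (0, 1))^[s] u)) q := by
        have swap : ∀ p ∈ UU Y, (Dv (0, 1))^[s] (Dv (1, 0) u) p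
            = Dv (1, 0) ((Dv (0, 1))^[s] u) p := Dv_swap_iter hu _ _ s
        calc ((Dv (1, 0))^[r] ((Dv (0, 1))^[s] (Dv (1, 0) u))) q
            = ((Dv (1, 0))^[r] (Dv (1, 0) ((Dv (0, 1))^[s] u))) q :=
              Dv_iter_congr swap r q hqU
          _ = ((Dv (1, 0))^[r + 1] ((Dv (0, 1))^[s] u)) q := by
              rw [Function.iterate_succ_apply]
      rw [e]; exact hbd q hq
    have hb2 : ∀ r s : ℕ, ∃ C : ℝ, 0 < C ∧ ∃ Y' : ℝ, Y < Y' ∧ ∀ q : ℝ × ℝ, Y' ≤ q.2 →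
        ‖((Dv (1, 0))^[r] ((Dv (0, 1))^[s] (Dv (0, 1) u))) q‖
          ≤ C * Real.exp (-Real.pi * q.2) := by
      intro r s
      obtain ⟨C, hC, Y', hY', hbd⟩ := hb r (s + 1)
      refine ⟨C, hC, Y', hY', fun q hq => ?_⟩
      have e : (Dv (0, 1))^[s] (Dv (0, 1) u) = (Dv (0, 1))^[s + 1] u :=
        (Function.iterate_succ_apply _ _ _).symm
      rw [e]; exact hbd q hq
    obtain ⟨C₁, hC₁, Y₁, hY₁, hbd₁⟩ := ih (Dv (1, 0) u) (Dv_contDiffOn hu) hb1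
    obtain ⟨C₂, hC₂, Y₂, hY₂, hbd₂⟩ := ih (Dv (0, 1) u) (Dv_contDiffOn hu) hb2
    refine ⟨C₁ + C₂, by positivity, max Y₁ Y₂, lt_of_lt_of_le hY₁ (le_max_left _ _),
      fun q hq => ?_⟩
    have hqU : q ∈ UU Y := lt_of_lt_of_le hY₁ (le_trans (le_max_left _ _) hq)
    refine (key_ineq hu hqU n).trans ?_
    have := add_le_add (hbd₁ q (le_trans (le_max_left _ _) hq))
      (hbd₂ q (le_trans (le_max_right _ _) hq))
    linarith

end part3

section combinators

lemma max_over (g : ℕ → ℝ) : ∀ m : ℕ, ∃ C : ℝ, 0 < C ∧ ∀ i ≤ m, g i ≤ C := by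
  intro m
  induction m with
  | zero =>
    refine ⟨max 1 (g 0), lt_max_of_lt_left one_pos, fun i hi => ?_⟩
    interval_cases i
    exact le_max_right _ _
  | succ m ih =>
    obtain ⟨C, hC, hb⟩ := ih
    refine ⟨max C (g (m + 1)), lt_max_of_lt_left hC, fun i hi => ?_⟩
    rcases Nat.le_succ_iff.1 hi with h | h
    · exact (hb i h).trans (le_max_left _ _)
    · rw [h]; exact le_max_right _ _

lemma tail_comb (Y : ℝ) (g : ℕ → ℝ × ℝ → ℝ) : ∀ m : ℕ,
    (∀ i ≤ m, ∃ C : ℝ, 0 < C ∧ ∃ Y' : ℝ, Y < Y' ∧ ∀ q : ℝ × ℝ, Y' ≤ q.2 →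
      g i q ≤ C * Real.exp (-Real.pi * q.2)) →
    ∃ C : ℝ, 0 < C ∧ ∃ Y' : ℝ, Y < Y' ∧ ∀ q : ℝ × ℝ, Y' ≤ q.2 → ∀ i ≤ m,
      g i q ≤ C * Real.exp (-Real.pi * q.2) := by
  intro m
  induction m with
  | zero =>
    intro hyp
    obtain ⟨C, hC, Y', hY', hb⟩ := hyp 0 le_rfl
    refine ⟨C, hC, Y', hY', fun q hq i hi => ?_⟩
    interval_cases i
    exact hb q hq
  | succ m ih =>
    intro hyp
    obtain ⟨C, hC, Y', hY', hb⟩ := ih fun i hi => hyp i (hi.trans (Nat.le_succ m))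
    obtain ⟨C', hC', Y'', hY'', hb'⟩ := hyp (m + 1) le_rfl
    refine ⟨max C C', lt_max_of_lt_left hC, max Y' Y'',
      lt_of_lt_of_le hY' (le_max_left _ _), fun q hq i hi => ?_⟩
    have he : 0 < Real.exp (-Real.pi * q.2) := Real.exp_pos _
    rcases Nat.le_succ_iff.1 hi with h | h
    · exact (hb q ((le_max_left _ _).trans hq) i h).trans
        (mul_le_mul_of_nonneg_right (le_max_left _ _) he.le)
    · rw [h]
      exact (hb' q ((le_max_right _ _).trans hq)).trans
        (mul_le_mul_of_nonneg_right (le_max_right _ _) he.le)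

end combinators

/-- if `F = c + h` with `c > 0` and `h` real-valued in the class 𝐡, then `F`
is eventually `> c/2` and `Δ(log F)`, restricted to `{y > Y}`, belongs to the class 𝐡. -/
theorem laplacian_log_of_constant_plus_h
    (c : ℝ) (hc : 0 < c) (y₀ : ℝ) (h : ℝ → ℝ → ℝ) (hh : InClassH y₀ h)
    (F : ℝ → ℝ → ℝ) (hF : ∀ x y : ℝ, F x y = c + h x y) :
    ∃ Y : ℝ, y₀ < Y ∧ (∀ x y : ℝ, Y ≤ y → c / 2 < F x y) ∧
      InClassH Y (fun x y : ℝ =>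
        pdX (pdX (fun x' y' => Real.log (F x' y'))) x y +
          pdY (pdY (fun x' y' => Real.log (F x' y'))) x y) := by
  obtain ⟨hsm, hbd⟩ := hh
  obtain ⟨C₀, hC₀, Y₀, hY₀, hb00⟩ := hbd 0 0
  simp only [Function.iterate_zero, id] at hb00
  set T : ℝ := -Real.log (c / (4 * C₀)) / Real.pi with hT
  set Y : ℝ := max Y₀ T with hYdef
  have hY : y₀ < Y := lt_of_lt_of_le hY₀ (le_max_left _ _)
  have hsmall : ∀ q : ℝ × ℝ, Y ≤ q.2 → |h q.1 q.2| ≤ c / 4 := by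
    intro q hq
    have h1 : ‖h q.1 q.2‖ ≤ C₀ * Real.exp (-Real.pi * q.2) :=
      hb00 q.1 q.2 ((le_max_left _ _).trans hq)
    have h2 : Real.exp (-Real.pi * q.2) ≤ c / (4 * C₀) := by
      have hq2 : T ≤ q.2 := (le_max_right _ _).trans hq
      have hπT : Real.pi * T = -Real.log (c / (4 * C₀)) := by
        rw [hT]; field_simp
      have hmul : Real.pi * T ≤ Real.pi * q.2 :=
        mul_le_mul_of_nonneg_left hq2 Real.pi_pos.le
      have hle : -Real.pi * q.2 ≤ Real.log (c / (4 * C₀)) := by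
        rw [hπT] at hmul; linarith
      calc Real.exp (-Real.pi * q.2) ≤ Real.exp (Real.log (c / (4 * C₀))) :=
            Real.exp_le_exp.2 hle
        _ = c / (4 * C₀) := Real.exp_log (by positivity)
    rw [Real.norm_eq_abs] at h1
    calc |h q.1 q.2| ≤ C₀ * (c / (4 * C₀)) :=
          h1.trans (mul_le_mul_of_nonneg_left h2 hC₀.le)
      _ = c / 4 := by field_simp
  have hFpos : ∀ x y : ℝ, Y ≤ y → c / 2 < F x y := by
    intro x y hy
    have := abs_le.1 (hsmall (x, y) hy)
    rw [hF]; simp only at this; linarith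
  refine ⟨Y, hY, hFpos, ?_⟩
  set h' : ℝ × ℝ → ℝ := fun q => h q.1 q.2 with hh'def
  have hsub : UU Y ⊆ UU y₀ := fun q hq => lt_trans hY hq
  have hh' : ContDiffOn ℝ (⊤ : ℕ∞) h' (UU Y) := hsm.mono hsub
  have hpos' : ∀ q ∈ UU Y, 0 < c + h' q := by
    intro q hq
    have := abs_le.1 (hsmall q (le_of_lt hq))
    linarith
  set φ : ℝ → ℝ := fun z => Real.log (c + z) - Real.log c with hφdef
  set g0 : ℝ × ℝ → ℝ := fun q => φ (h' q) with hg0def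
  have hg0 : ContDiffOn ℝ (⊤ : ℕ∞) g0 (UU Y) := by
    rw [hg0def, hφdef]
    exact ((contDiffOn_const.add hh').log fun q hq => (hpos' q hq).ne').sub contDiffOn_const
  set G : ℝ × ℝ → ℝ :=
    fun q => Dv (1, 0) (Dv (1, 0) g0) q + Dv (0, 1) (Dv (0, 1) g0) q with hGdef
  have hG : ContDiffOn ℝ (⊤ : ℕ∞) G (UU Y) :=
    (Dv_contDiffOn (Dv_contDiffOn hg0)).add (Dv_contDiffOn (Dv_contDiffOn hg0))
  set Lc : ℝ → ℝ → ℝ := fun x' y' => Real.log (F x' y') with hLcdef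
  set L0 : ℝ × ℝ → ℝ := fun p => Real.log c + g0 p with hL0def
  have hL0sm : ContDiffOn ℝ (⊤ : ℕ∞) L0 (UU Y) := contDiffOn_const.add hg0
  have hLag : ∀ q ∈ UU Y, Lc q.1 q.2 = L0 q := by
    intro q hq
    rw [hLcdef, hL0def, hg0def, hφdef]
    simp only [hF]
    ring
  have hDvL : ∀ v : ℝ × ℝ, Dv v L0 = Dv v g0 := by
    intro v
    funext p
    show fderiv ℝ (fun q => Real.log c + g0 q) p v = fderiv ℝ g0 p v
    rw [fderiv_const_add]
  have hagX : ∀ q ∈ UU Y, pdX Lc q.1 q.2 = Dv (1, 0) g0 q := by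
    intro q hq
    rw [← hDvL (1, 0)]
    simpa using pdX_eq (Y := Y) hL0sm hLag (x := q.1) (y := q.2) hq
  have hagY : ∀ q ∈ UU Y, pdY Lc q.1 q.2 = Dv (0, 1) g0 q := by
    intro q hq
    rw [← hDvL (0, 1)]
    simpa using pdY_eq (Y := Y) hL0sm hLag (x := q.1) (y := q.2) hq
  have hagXX : ∀ q ∈ UU Y, pdX (pdX Lc) q.1 q.2 = Dv (1, 0) (Dv (1, 0) g0) q := by
    intro q hq
    simpa using pdX_eq (Y := Y) (Dv_contDiffOn hg0) hagX (x := q.1) (y := q.2) hq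
  have hagYY : ∀ q ∈ UU Y, pdY (pdY Lc) q.1 q.2 = Dv (0, 1) (Dv (0, 1) g0) q := by
    intro q hq
    simpa using pdY_eq (Y := Y) (Dv_contDiffOn hg0) hagY (x := q.1) (y := q.2) hq
  have hagree : ∀ q ∈ UU Y,
      (fun x y : ℝ => pdX (pdX Lc) x y + pdY (pdY Lc) x y) q.1 q.2 = G q := by
    intro q hq
    simp only
    rw [hagXX q hq, hagYY q hq, hGdef]
  -- the target set `t` for the composition bound, and bounds for `φ` on it
  set t : Set ℝ := Metric.closedBall (0 : ℝ) (c / 4) with htdef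
  have htconv : UniqueDiffOn ℝ t := by
    refine uniqueDiffOn_convex (convex_closedBall _ _) ?_
    rw [htdef, interior_closedBall _ (by positivity : (c / 4 : ℝ) ≠ 0)]
    exact ⟨0, Metric.mem_ball_self (by positivity)⟩
  have hmemt : ∀ z ∈ t, 0 < c + z := by
    intro z hz
    rw [htdef, Metric.mem_closedBall, Real.dist_eq, sub_zero] at hz
    have := abs_le.1 hz
    linarith
  have hφt : ContDiffOn ℝ (⊤ : ℕ∞) φ t := by
    rw [hφdef]
    exact ((contDiffOn_const.add contDiffOn_id).log
      fun z hz => (hmemt z hz).ne').sub contDiffOn_const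
  have hmapsto : Set.MapsTo h' (UU Y) t := by
    intro q hq
    rw [htdef, Metric.mem_closedBall, Real.dist_eq, sub_zero]
    exact hsmall q hq.le
  have hφbd : ∀ m : ℕ, ∃ Cφ : ℝ, 0 < Cφ ∧ ∀ i ≤ m, ∀ z ∈ t,
      ‖iteratedFDerivWithin ℝ i φ t z‖ ≤ Cφ := by
    intro m
    have hex : ∀ i : ℕ, ∃ C : ℝ, ∀ z ∈ t, ‖iteratedFDerivWithin ℝ i φ t z‖ ≤ C := by
      intro i
      exact (isCompact_closedBall _ _).exists_bound_of_continuousOn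
        (hφt.continuousOn_iteratedFDerivWithin (by exact_mod_cast le_top) htconv)
    choose Cf hCf using hex
    obtain ⟨Cφ, hCφ, hb⟩ := max_over Cf m
    exact ⟨Cφ, hCφ, fun i hi z hz => (hCf i z hz).trans (hb i hi)⟩
  -- decay of the full iterated derivatives of h'
  have hbDv : ∀ r s : ℕ, ∃ C : ℝ, 0 < C ∧ ∃ Y' : ℝ, Y < Y' ∧ ∀ q : ℝ × ℝ, Y' ≤ q.2 →
      ‖((Dv (1, 0))^[r] ((Dv (0, 1))^[s] h')) q‖ ≤ C * Real.exp (-Real.pi * q.2) := by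
    intro r s
    obtain ⟨C, hC, Yrs, hYrs, hbrs⟩ := hbd r s
    refine ⟨C, hC, max Yrs (Y + 1),
      lt_of_lt_of_le (lt_add_one Y) (le_max_right _ _), fun q hq => ?_⟩
    have hqU : q ∈ UU Y :=
      lt_of_lt_of_le (lt_add_one Y) ((le_max_right _ _).trans hq)
    have he := pdXY_iter_eq (Y := Y) hh' (fun p _ => rfl) r s q hqU
    rw [← he]
    exact hbrs q.1 q.2 ((le_max_left _ _).trans hq)
  have hQh' : ∀ n : ℕ, ∃ C : ℝ, 0 < C ∧ ∃ Y' : ℝ, Y < Y' ∧ ∀ q : ℝ × ℝ, Y' ≤ q.2 →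
      ‖iteratedFDeriv ℝ n h' q‖ ≤ C * Real.exp (-Real.pi * q.2) :=
    fun n => iFD_decay n h' hh' hbDv
  -- decay of the iterated derivatives of g0 = φ ∘ h' of positive order
  have hQg0 : ∀ m : ℕ, 1 ≤ m → ∃ C : ℝ, 0 < C ∧ ∃ Y' : ℝ, Y < Y' ∧
      ∀ q : ℝ × ℝ, Y' ≤ q.2 →
      ‖iteratedFDeriv ℝ m g0 q‖ ≤ C * Real.exp (-Real.pi * q.2) := by
    intro m hm
    obtain ⟨Cφ, hCφ, hφb⟩ := hφbd m
    obtain ⟨M, hM, YM, hYM, hMb⟩ := tail_comb Y (fun i q => ‖iteratedFDeriv ℝ i h' q‖) m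
      (fun i _ => hQh' i)
    refine ⟨(m.factorial : ℝ) * Cφ * M, by positivity, max YM (Real.log M / Real.pi),
      lt_of_lt_of_le hYM (le_max_left _ _), fun q hq => ?_⟩
    have hqU : q ∈ UU Y := lt_of_lt_of_le hYM ((le_max_left _ _).trans hq)
    have hx0 : 0 < M * Real.exp (-Real.pi * q.2) := by positivity
    have hx1 : M * Real.exp (-Real.pi * q.2) ≤ 1 := by
      have h2 : Real.log M / Real.pi ≤ q.2 := (le_max_right _ _).trans hq
      have h1 : Real.log M ≤ Real.pi * q.2 := by
        calc Real.log M = Real.log M / Real.pi * Real.pi := by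
              field_simp
          _ ≤ q.2 * Real.pi := mul_le_mul_of_nonneg_right h2 Real.pi_pos.le
          _ = Real.pi * q.2 := mul_comm _ _
      have hexp : Real.exp (-Real.pi * q.2) ≤ M⁻¹ := by
        rw [show M⁻¹ = Real.exp (-Real.log M) by rw [Real.exp_neg, Real.exp_log hM]]
        exact Real.exp_le_exp.2 (by linarith)
      calc M * Real.exp (-Real.pi * q.2) ≤ M * M⁻¹ :=
            mul_le_mul_of_nonneg_left hexp hM.le
        _ = 1 := mul_inv_cancel₀ hM.ne'
    set D : ℝ := (M * Real.exp (-Real.pi * q.2)) ^ ((m : ℝ)⁻¹) with hD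
    have hD0 : 0 ≤ D := Real.rpow_nonneg hx0.le _
    have hD1 : D ≤ 1 := Real.rpow_le_one hx0.le hx1 (by positivity)
    have hmne : (m : ℝ) ≠ 0 := Nat.cast_ne_zero.2 (by omega)
    have hDm : D ^ m = M * Real.exp (-Real.pi * q.2) := by
      rw [hD, ← Real.rpow_natCast ((M * Real.exp (-Real.pi * q.2)) ^ ((m : ℝ)⁻¹)) m,
        ← Real.rpow_mul hx0.le, inv_mul_cancel₀ hmne, Real.rpow_one]
    have hDbound : ∀ i : ℕ, 1 ≤ i → i ≤ m →
        ‖iteratedFDerivWithin ℝ i h' (UU Y) q‖ ≤ D ^ i := by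
      intro i h1i him
      rw [iteratedFDerivWithin_of_isOpen _ (isOpen_UU Y) hqU]
      calc ‖iteratedFDeriv ℝ i h' q‖ ≤ M * Real.exp (-Real.pi * q.2) :=
            hMb q ((le_max_left _ _).trans hq) i him
        _ = D ^ m := hDm.symm
        _ ≤ D ^ i := pow_le_pow_of_le_one hD0 hD1 him
    have hcomp := norm_iteratedFDerivWithin_comp_le (𝕜 := ℝ) (g := φ) (f := h')
      (n := m) (s := UU Y) (t := t) (x := q) (N := ((⊤ : ℕ∞) : WithTop ℕ∞)) hφt hh' (by exact_mod_cast le_top)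
      htconv (uniqueDiffOn_UU Y) hmapsto hqU
      (fun i hi => hφb i hi (h' q) (hmapsto hqU)) hDbound
    have heq : ‖iteratedFDeriv ℝ m g0 q‖
        = ‖iteratedFDerivWithin ℝ m (φ ∘ h') (UU Y) q‖ := by
      rw [iteratedFDerivWithin_of_isOpen _ (isOpen_UU Y) hqU]
      rfl
    rw [heq]
    refine hcomp.trans ?_
    rw [hDm]
    have : (m.factorial : ℝ) * Cφ * (M * Real.exp (-Real.pi * q.2))
        = (m.factorial : ℝ) * Cφ * M * Real.exp (-Real.pi * q.2) := by ring
    rw [this]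
  -- norm of basis vectors
  have he1 : ‖((1 : ℝ), (0 : ℝ))‖ ≤ 1 := by
    rw [Prod.norm_def]
    simp
  have he2 : ‖((0 : ℝ), (1 : ℝ))‖ ≤ 1 := by
    rw [Prod.norm_def]
    simp
  -- decay of the iterated derivatives of G
  have hQG : ∀ m : ℕ, ∃ C : ℝ, 0 < C ∧ ∃ Y' : ℝ, Y < Y' ∧ ∀ q : ℝ × ℝ, Y' ≤ q.2 →
      ‖iteratedFDeriv ℝ m G q‖ ≤ C * Real.exp (-Real.pi * q.2) := by
    intro m
    obtain ⟨C, hC, Y', hY', hb'⟩ := hQg0 (m + 2) (by omega)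
    refine ⟨2 * C, by positivity, Y', hY', fun q hq => ?_⟩
    have hqU : q ∈ UU Y := lt_of_lt_of_le hY' hq
    have hA : ContDiffOn ℝ (⊤ : ℕ∞) (Dv (1, 0) (Dv (1, 0) g0)) (UU Y) :=
      Dv_contDiffOn (Dv_contDiffOn hg0)
    have hB : ContDiffOn ℝ (⊤ : ℕ∞) (Dv (0, 1) (Dv (0, 1) g0)) (UU Y) :=
      Dv_contDiffOn (Dv_contDiffOn hg0)
    have hsplit : iteratedFDeriv ℝ m G q =
        iteratedFDerivWithin ℝ m (Dv (1, 0) (Dv (1, 0) g0)) (UU Y) q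
        + iteratedFDerivWithin ℝ m (Dv (0, 1) (Dv (0, 1) g0)) (UU Y) q := by
      rw [← iteratedFDerivWithin_of_isOpen _ (isOpen_UU Y) hqU, hGdef]
      exact iteratedFDerivWithin_add_apply' ((hA.of_le (by exact_mod_cast le_top)) q hqU) ((hB.of_le (by exact_mod_cast le_top)) q hqU)
        (uniqueDiffOn_UU Y) hqU
    have b1 : ‖iteratedFDerivWithin ℝ m (Dv (1, 0) (Dv (1, 0) g0)) (UU Y) q‖
        ≤ ‖iteratedFDeriv ℝ (m + 2) g0 q‖ := by
      rw [iteratedFDerivWithin_of_isOpen _ (isOpen_UU Y) hqU]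
      calc ‖iteratedFDeriv ℝ m (Dv (1, 0) (Dv (1, 0) g0)) q‖
          ≤ ‖((1 : ℝ), (0 : ℝ))‖ * ‖iteratedFDeriv ℝ (m + 1) (Dv (1, 0) g0) q‖ :=
            norm_iFD_Dv (Dv_contDiffOn hg0) hqU m
        _ ≤ ‖iteratedFDeriv ℝ (m + 1) (Dv (1, 0) g0) q‖ :=
            mul_le_of_le_one_left (norm_nonneg _) he1
        _ ≤ ‖((1 : ℝ), (0 : ℝ))‖ * ‖iteratedFDeriv ℝ (m + 1 + 1) g0 q‖ :=
            norm_iFD_Dv hg0 hqU (m + 1)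
        _ ≤ ‖iteratedFDeriv ℝ (m + 2) g0 q‖ :=
            mul_le_of_le_one_left (norm_nonneg _) he1
    have b2 : ‖iteratedFDerivWithin ℝ m (Dv (0, 1) (Dv (0, 1) g0)) (UU Y) q‖
        ≤ ‖iteratedFDeriv ℝ (m + 2) g0 q‖ := by
      rw [iteratedFDerivWithin_of_isOpen _ (isOpen_UU Y) hqU]
      calc ‖iteratedFDeriv ℝ m (Dv (0, 1) (Dv (0, 1) g0)) q‖
          ≤ ‖((0 : ℝ), (1 : ℝ))‖ * ‖iteratedFDeriv ℝ (m + 1) (Dv (0, 1) g0) q‖ :=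
            norm_iFD_Dv (Dv_contDiffOn hg0) hqU m
        _ ≤ ‖iteratedFDeriv ℝ (m + 1) (Dv (0, 1) g0) q‖ :=
            mul_le_of_le_one_left (norm_nonneg _) he2
        _ ≤ ‖((0 : ℝ), (1 : ℝ))‖ * ‖iteratedFDeriv ℝ (m + 1 + 1) g0 q‖ :=
            norm_iFD_Dv hg0 hqU (m + 1)
        _ ≤ ‖iteratedFDeriv ℝ (m + 2) g0 q‖ :=
            mul_le_of_le_one_left (norm_nonneg _) he2
    calc ‖iteratedFDeriv ℝ m G q‖
        ≤ ‖iteratedFDerivWithin ℝ m (Dv (1, 0) (Dv (1, 0) g0)) (UU Y) q‖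
          + ‖iteratedFDerivWithin ℝ m (Dv (0, 1) (Dv (0, 1) g0)) (UU Y) q‖ := by
          rw [hsplit]; exact norm_add_le _ _
      _ ≤ ‖iteratedFDeriv ℝ (m + 2) g0 q‖ + ‖iteratedFDeriv ℝ (m + 2) g0 q‖ :=
          add_le_add b1 b2
      _ ≤ 2 * C * Real.exp (-Real.pi * q.2) := by
          have := hb' q hq
          linarith
  refine ⟨?_, ?_⟩
  · exact hG.congr hagree
  · intro r s
    obtain ⟨C, hC, Y', hY', hb'⟩ := hQG (r + s)
    refine ⟨C, hC, Y', hY', fun x y hy => ?_⟩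
    have hyU : (x, y) ∈ UU Y := lt_of_lt_of_le hY' hy
    have he := pdXY_iter_eq (Y := Y) (f := fun x y : ℝ => pdX (pdX Lc) x y + pdY (pdY Lc) x y) hG hagree r s (x, y) hyU
    calc ‖(pdX^[r] (pdY^[s] fun x y : ℝ =>
            pdX (pdX Lc) x y + pdY (pdY Lc) x y)) x y‖
        = ‖((Dv (1, 0))^[r] ((Dv (0, 1))^[s] G)) (x, y)‖ := by
          rw [show (pdX^[r] (pdY^[s] fun x y : ℝ =>
            pdX (pdX Lc) x y + pdY (pdY Lc) x y)) x y
            = ((Dv (1, 0))^[r] ((Dv (0, 1))^[s] G)) (x, y) from he]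
      _ = ‖iteratedFDeriv ℝ 0 ((Dv (1, 0))^[r] ((Dv (0, 1))^[s] G)) (x, y)‖ :=
          (norm_iteratedFDeriv_zero).symm
      _ ≤ ‖iteratedFDeriv ℝ (0 + r) ((Dv (0, 1))^[s] G) (x, y)‖ :=
          norm_iFD_Dv_iter he1 hG hyU r 0 _ (Dv_iter_contDiffOn hG s)
      _ ≤ ‖iteratedFDeriv ℝ (0 + r + s) G (x, y)‖ :=
          norm_iFD_Dv_iter he2 hG hyU s (0 + r) _ hG
      _ ≤ C * Real.exp (-Real.pi * y) := by
          rw [show 0 + r + s = r + s by omega]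
          exact hb' (x, y) hy
end

section
/- Let a ≥ 1 and b ≥ 1. Let A : ℝ → M_a(ℂ) be a function with each A(y) Hermitian and A(y) → A_∞ entrywise as y → ∞, where A_∞ is positive definite. Let B : ℝ → M_{a×b}(ℂ) have uniformly bounded entries. Let Q ∈ M_b(ℂ) be positive definite Hermitian, P ∈ M_b(ℂ) Hermitian, and H : ℝ → M_b(ℂ) Hermitian-valued with H(y) → 0 entrywise as y → ∞; set D(y) := 2y·Q + P + H(y). Then there exists Y ∈ ℝ such that for every y ≥ Y the Hermitian block matrix [[A(y), B(y)], [B(y)*, D(y)]] ∈ M_{a+b}(ℂ) is positive definite. -/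
open scoped ComplexOrder

open Matrix Finset Filter


/-- quadratic form of a Hermitian matrix has zero imaginary part -/
lemma herm_quad_im_zero {n : Type*} [Fintype n] {M : Matrix n n ℂ} (hM : M.IsHermitian)
    (x : n → ℂ) : (star x ⬝ᵥ M *ᵥ x).im = 0 := by
  have h : (starRingEnd ℂ) (star x ⬝ᵥ M *ᵥ x) = star x ⬝ᵥ M *ᵥ x := by
    have h1 : star (star x ⬝ᵥ M *ᵥ x) = star (M *ᵥ x) ⬝ᵥ x := by
      rw [star_dotProduct, star_star]
    have h2 : star (M *ᵥ x) ⬝ᵥ x = star x ⬝ᵥ Mᴴ *ᵥ x := by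
      rw [star_mulVec, ← dotProduct_mulVec]
    calc (starRingEnd ℂ) (star x ⬝ᵥ M *ᵥ x) = star (star x ⬝ᵥ M *ᵥ x) := rfl
    _ = star x ⬝ᵥ Mᴴ *ᵥ x := by rw [h1, h2]
    _ = star x ⬝ᵥ M *ᵥ x := by rw [hM.eq]
  exact Complex.conj_eq_iff_im.mp h

/-- entrywise-sum bound on a sesquilinear form -/
lemma abs_star_dotProduct_mulVec_le {m n : Type*} [Fintype m] [Fintype n]
    (M : Matrix m n ℂ) (u : m → ℂ) (v : n → ℂ) :
    ‖star u ⬝ᵥ M *ᵥ v‖ ≤ (∑ i, ∑ j, ‖M i j‖) * (‖u‖ * ‖v‖) := by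
  have hu : ∀ i, ‖u i‖ ≤ ‖u‖ := fun i => norm_le_pi_norm u i
  have hv : ∀ j, ‖v j‖ ≤ ‖v‖ := fun j => norm_le_pi_norm v j
  have key : ∀ i, ‖(star u) i * (M *ᵥ v) i‖
      ≤ (∑ j, ‖M i j‖) * (‖u‖ * ‖v‖) := by
    intro i
    rw [norm_mul]
    have h1 : ‖(star u) i‖ ≤ ‖u‖ := by
      simpa [Pi.star_apply, Complex.norm_conj] using hu i
    have h2 : ‖(M *ᵥ v) i‖ ≤ (∑ j, ‖M i j‖) * ‖v‖ := by
      calc ‖(M *ᵥ v) i‖ = ‖∑ j, M i j * v j‖ := by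
            simp [Matrix.mulVec, dotProduct]
      _ ≤ ∑ j, ‖M i j * v j‖ := norm_sum_le _ _
      _ ≤ ∑ j, ‖M i j‖ * ‖v‖ := by
            refine Finset.sum_le_sum fun j _ => ?_
            rw [norm_mul]
            exact mul_le_mul_of_nonneg_left (hv j) (norm_nonneg _)
      _ = (∑ j, ‖M i j‖) * ‖v‖ := by rw [Finset.sum_mul]
    calc ‖(star u) i‖ * ‖(M *ᵥ v) i‖
        ≤ ‖u‖ * ((∑ j, ‖M i j‖) * ‖v‖) :=
          mul_le_mul h1 h2 (norm_nonneg _) (norm_nonneg _)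
    _ = (∑ j, ‖M i j‖) * (‖u‖ * ‖v‖) := by ring
  calc ‖star u ⬝ᵥ M *ᵥ v‖ = ‖∑ i, (star u) i * (M *ᵥ v) i‖ := rfl
  _ ≤ ∑ i, ‖(star u) i * (M *ᵥ v) i‖ := norm_sum_le _ _
  _ ≤ ∑ i, (∑ j, ‖M i j‖) * (‖u‖ * ‖v‖) := Finset.sum_le_sum fun i _ => key i
  _ = (∑ i, ∑ j, ‖M i j‖) * (‖u‖ * ‖v‖) := by rw [Finset.sum_mul]

/-- coercivity of a positive definite matrix w.r.t. the sup norm -/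
lemma posdef_coercive {n : ℕ} (hn : 1 ≤ n) {M : Matrix (Fin n) (Fin n) ℂ} (hM : M.PosDef) :
    ∃ c : ℝ, 0 < c ∧ ∀ x : Fin n → ℂ, c * (‖x‖ * ‖x‖) ≤ (star x ⬝ᵥ M *ᵥ x).re := by
  haveI : Nonempty (Fin n) := Fin.pos_iff_nonempty.mp hn
  have hcont : Continuous fun x : Fin n → ℂ => (star x ⬝ᵥ M *ᵥ x).re := by
    exact Complex.continuous_re.comp
      ((continuous_star.dotProduct (continuous_const.matrix_mulVec continuous_id)))
  set f : (Fin n → ℂ) → ℝ := fun x => (star x ⬝ᵥ M *ᵥ x).re with hf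
  have hS : IsCompact (Metric.sphere (0 : Fin n → ℂ) 1) := isCompact_sphere 0 1
  have hne : (Metric.sphere (0 : Fin n → ℂ) 1).Nonempty :=
    NormedSpace.sphere_nonempty.mpr zero_le_one
  obtain ⟨x0, hx0S, hmin⟩ := hS.exists_isMinOn hne hcont.continuousOn
  have hx0norm : ‖x0‖ = 1 := mem_sphere_zero_iff_norm.mp hx0S
  have hx0ne : x0 ≠ 0 := by
    intro h
    rw [h, norm_zero] at hx0norm
    norm_num at hx0norm
  have hc : 0 < f x0 := by
    have := hM.re_dotProduct_pos hx0ne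
    simpa [hf, RCLike.re_to_complex] using this
  refine ⟨f x0, hc, fun x => ?_⟩
  by_cases hx : x = 0
  · simp [hx, hf]
  · have hr : 0 < ‖x‖ := norm_pos_iff.mpr hx
    have hrc : ((‖x‖ : ℂ)) ≠ 0 := by
      simp only [ne_eq, Complex.ofReal_eq_zero]
      exact hr.ne'
    set x' : Fin n → ℂ := ((‖x‖ : ℂ))⁻¹ • x with hx'
    have hx'norm : ‖x'‖ = 1 := by
      rw [hx', norm_smul, norm_inv]
      have : ‖((‖x‖ : ℝ) : ℂ)‖ = ‖x‖ := by
        rw [Complex.norm_real, Real.norm_eq_abs, abs_of_pos hr]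
      rw [this, inv_mul_cancel₀ hr.ne']
    have hx's : x = ((‖x‖ : ℂ)) • x' := by
      rw [hx', smul_inv_smul₀ hrc]
    have hq : star x ⬝ᵥ M *ᵥ x = ((‖x‖ : ℂ)) * ((‖x‖ : ℂ)) * (star x' ⬝ᵥ M *ᵥ x') := by
      conv_lhs => rw [hx's]
      rw [star_smul, Matrix.mulVec_smul, smul_dotProduct, dotProduct_smul]
      have : star ((‖x‖ : ℂ)) = ((‖x‖ : ℂ)) := by
        rw [Complex.star_def, Complex.conj_ofReal]
      rw [this]
      simp [smul_eq_mul]; ring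
    have hre : (star x ⬝ᵥ M *ᵥ x).re = (‖x‖ * ‖x‖) * f x' := by
      rw [hq]
      have : ((‖x‖ : ℂ)) * ((‖x‖ : ℂ)) = ((‖x‖ * ‖x‖ : ℝ) : ℂ) := by
        push_cast; ring
      rw [this, Complex.re_ofReal_mul]
    have hfx' : f x0 ≤ f x' := hmin (mem_sphere_zero_iff_norm.mpr hx'norm)
    rw [hre]
    have := mul_le_mul_of_nonneg_left hfx' (mul_nonneg (norm_nonneg x) (norm_nonneg x))
    linarith [this]



lemma quad_pos_aux (al be ga s t : ℝ) (hal : 0 < al) (hbe : 0 ≤ be) (hs : 0 ≤ s) (ht : 0 ≤ t)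
    (hga : be ^ 2 < al * ga) (hst : 0 < s ∨ 0 < t) :
    0 < al * (s * s) - 2 * be * (s * t) + ga * (t * t) := by
  rcases ht.eq_or_lt with h | h
  · rcases hst with hs' | ht'
    · rw [← h]; ring_nf; nlinarith [mul_pos hal (mul_pos hs' hs')]
    · exfalso; rw [← h] at ht'; exact lt_irrefl 0 ht'
  · nlinarith [sq_nonneg (al * s - be * t), mul_pos h h, mul_pos hal hal]

set_option maxHeartbeats 1600000 in
/-- the Hermitian block matrix `[[A(y), B(y)], [B(y)ᴴ, D(y)]]`, where
`A(y) → A∞` positive definite, `B` has uniformly bounded entries and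
`D(y) = 2y·Q + P + H(y)` with `Q` positive definite, `P` Hermitian and `H(y) → 0`
Hermitian, is positive definite for all large `y`. -/
theorem eventually_posDef_block_matrix
    (a b : ℕ) (ha : 1 ≤ a) (hb : 1 ≤ b)
    (A : ℝ → Matrix (Fin a) (Fin a) ℂ) (hAherm : ∀ y : ℝ, (A y).IsHermitian)
    (Ainf : Matrix (Fin a) (Fin a) ℂ) (hAinf : Ainf.PosDef)
    (hA : Filter.Tendsto A Filter.atTop (nhds Ainf))
    (B : ℝ → Matrix (Fin a) (Fin b) ℂ)
    (hB : ∃ Cb : ℝ, ∀ (y : ℝ) (i : Fin a) (j : Fin b), ‖B y i j‖ ≤ Cb)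
    (Q P : Matrix (Fin b) (Fin b) ℂ) (hQ : Q.PosDef) (hP : P.IsHermitian)
    (H : ℝ → Matrix (Fin b) (Fin b) ℂ) (hHherm : ∀ y : ℝ, (H y).IsHermitian)
    (hH : Filter.Tendsto H Filter.atTop (nhds 0))
    (D : ℝ → Matrix (Fin b) (Fin b) ℂ)
    (hD : ∀ y : ℝ, D y = ((2 * y : ℝ) : ℂ) • Q + P + H y) :
    ∃ Y : ℝ, ∀ y : ℝ, Y ≤ y →
      (Matrix.fromBlocks (A y) (B y) (B y).conjTranspose (D y)).PosDef := by
  obtain ⟨cA, hcA, hcoA⟩ := posdef_coercive ha hAinf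
  obtain ⟨cQ, hcQ, hcoQ⟩ := posdef_coercive hb hQ
  obtain ⟨Cb, hCb⟩ := hB
  have i0 : Fin a := ⟨0, ha⟩
  have j0 : Fin b := ⟨0, hb⟩
  have hCb0 : 0 ≤ Cb := le_trans (norm_nonneg _) (hCb 0 i0 j0)
  set be : ℝ := (a * b : ℕ) * Cb with hbe_def
  have hbe0 : 0 ≤ be := mul_nonneg (by positivity) hCb0
  -- uniform bound on the cross term entry sums
  have hBsum : ∀ y : ℝ, (∑ i, ∑ j, ‖B y i j‖) ≤ be := by
    intro y
    calc (∑ i, ∑ j, ‖B y i j‖) ≤ ∑ _i : Fin a, ∑ _j : Fin b, Cb := by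
          exact Finset.sum_le_sum fun i _ => Finset.sum_le_sum fun j _ => hCb y i j
    _ = be := by simp [hbe_def]; push_cast; ring
  set kP : ℝ := ∑ i, ∑ j, ‖P i j‖ with hkP_def
  -- eventual closeness of A to Ainf
  have hAentry : ∀ i j, Filter.Tendsto (fun y => ‖A y i j - Ainf i j‖)
      Filter.atTop (nhds 0) := by
    intro i j
    have h1 : Filter.Tendsto (fun y => A y i j) Filter.atTop (nhds (Ainf i j)) :=
      ((continuous_id.matrix_elem i j).tendsto Ainf).comp hA
    have h2 : Filter.Tendsto (fun y => A y i j - Ainf i j) Filter.atTop (nhds 0) := by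
      have := h1.sub (tendsto_const_nhds : Filter.Tendsto _ Filter.atTop (nhds (Ainf i j)))
      simpa using this
    simpa [Function.comp_def] using (continuous_norm.tendsto 0).comp h2
  have hAsum : Filter.Tendsto (fun y => ∑ i, ∑ j, ‖A y i j - Ainf i j‖)
      Filter.atTop (nhds 0) := by
    have := tendsto_finset_sum (Finset.univ : Finset (Fin a))
      (fun i _ => tendsto_finset_sum (Finset.univ : Finset (Fin a))
        (fun j _ => hAentry i j))
    simpa using this
  have hHentry : ∀ i j, Filter.Tendsto (fun y => ‖H y i j‖)
      Filter.atTop (nhds 0) := by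
    intro i j
    have h1 : Filter.Tendsto (fun y => H y i j) Filter.atTop (nhds 0) := by
      have := ((continuous_id.matrix_elem i j).tendsto (0 : Matrix (Fin b) (Fin b) ℂ)).comp hH
      simpa [Function.comp_def] using this
    simpa [Function.comp_def] using (continuous_norm.tendsto 0).comp h1
  have hHsum : Filter.Tendsto (fun y => ∑ i, ∑ j, ‖H y i j‖)
      Filter.atTop (nhds 0) := by
    have := tendsto_finset_sum (Finset.univ : Finset (Fin b))
      (fun i _ => tendsto_finset_sum (Finset.univ : Finset (Fin b))
        (fun j _ => hHentry i j))
    simpa using this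
  have ev1 : ∀ᶠ y in Filter.atTop, (∑ i, ∑ j, ‖A y i j - Ainf i j‖) < cA / 2 :=
    hAsum.eventually (eventually_lt_nhds (by positivity))
  have ev2 : ∀ᶠ y in Filter.atTop, (∑ i, ∑ j, ‖H y i j‖) < 1 :=
    hHsum.eventually (eventually_lt_nhds one_pos)
  have ev3 : ∀ᶠ y in Filter.atTop,
      kP + 1 + (2 * be ^ 2 + 2) / cA ≤ 2 * cQ * y := by
    have h : Filter.Tendsto (fun y : ℝ => 2 * cQ * y) Filter.atTop Filter.atTop := by
      exact (tendsto_id.const_mul_atTop (by positivity))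
    exact h.eventually_ge_atTop _
  have ev4 : ∀ᶠ y in Filter.atTop, (0 : ℝ) ≤ y := Filter.eventually_ge_atTop 0
  have hfinal : ∀ᶠ y in Filter.atTop,
      (Matrix.fromBlocks (A y) (B y) (B y).conjTranspose (D y)).PosDef := by
    filter_upwards [ev1, ev2, ev3, ev4] with y h1 h2 h3 h4
    -- the block matrix is Hermitian
    have hDherm : (D y).IsHermitian := by
      rw [hD y]
      refine Matrix.IsHermitian.add (Matrix.IsHermitian.add ?_ hP) (hHherm y)
      unfold Matrix.IsHermitian
      rw [Matrix.conjTranspose_smul, hQ.1.eq, Complex.star_def, Complex.conj_ofReal]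
    have hMherm : (Matrix.fromBlocks (A y) (B y) (B y).conjTranspose (D y)).IsHermitian :=
      Matrix.isHermitian_fromBlocks_iff.mpr
        ⟨hAherm y, rfl, Matrix.conjTranspose_conjTranspose _, hDherm⟩
    refine Matrix.PosDef.of_dotProduct_mulVec_pos hMherm fun z hz => ?_
    set u : Fin a → ℂ := z ∘ Sum.inl with hu_def
    set v : Fin b → ℂ := z ∘ Sum.inr with hv_def
    have hzelim : Sum.elim u v = z := Sum.elim_comp_inl_inr z
    have hstar : star z = Sum.elim (star u) (star v) := by
      funext i
      cases i <;> rfl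
    have hq : star z ⬝ᵥ (Matrix.fromBlocks (A y) (B y) (B y).conjTranspose (D y)) *ᵥ z
        = (star u ⬝ᵥ (A y) *ᵥ u + star u ⬝ᵥ (B y) *ᵥ v)
          + (star v ⬝ᵥ (B y)ᴴ *ᵥ u + star v ⬝ᵥ (D y) *ᵥ v) := by
      rw [Matrix.fromBlocks_mulVec, hstar, sumElim_dotProduct_sumElim,
        dotProduct_add, dotProduct_add]
    -- cross term is conjugate pair
    have hcross : star (star u ⬝ᵥ (B y) *ᵥ v) = star v ⬝ᵥ (B y)ᴴ *ᵥ u := by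
      rw [star_dotProduct, star_star, star_mulVec, ← Matrix.dotProduct_mulVec]
    set w : ℂ := star u ⬝ᵥ (B y) *ᵥ v with hw_def
    have hqre : (star z ⬝ᵥ (Matrix.fromBlocks (A y) (B y) (B y).conjTranspose (D y)) *ᵥ z).re
        = (star u ⬝ᵥ (A y) *ᵥ u).re + 2 * w.re + (star v ⬝ᵥ (D y) *ᵥ v).re := by
      rw [hq, ← hcross]
      simp [hw_def, Complex.add_re, Complex.conj_re]
      ring
    set s : ℝ := ‖u‖ with hs_def
    set t : ℝ := ‖v‖ with ht_def
    have hs0 : 0 ≤ s := norm_nonneg _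
    have ht0 : 0 ≤ t := norm_nonneg _
    -- A-term lower bound
    have hAterm : cA * (s * s) - (cA / 2) * (s * s) ≤ (star u ⬝ᵥ (A y) *ᵥ u).re := by
      have hsplit : star u ⬝ᵥ (A y) *ᵥ u
          = star u ⬝ᵥ Ainf *ᵥ u + star u ⬝ᵥ (A y - Ainf) *ᵥ u := by
        rw [← dotProduct_add, ← Matrix.add_mulVec, add_sub_cancel]
      have h1' : ‖star u ⬝ᵥ (A y - Ainf) *ᵥ u‖
          ≤ (∑ i, ∑ j, ‖(A y - Ainf) i j‖) * (s * s) :=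
        abs_star_dotProduct_mulVec_le _ u u
      have hEsum : (∑ i, ∑ j, ‖(A y - Ainf) i j‖) ≤ cA / 2 := by
        have := h1.le
        simpa [Matrix.sub_apply] using this
      have hE2 : ‖star u ⬝ᵥ (A y - Ainf) *ᵥ u‖ ≤ (cA / 2) * (s * s) :=
        h1'.trans (mul_le_mul_of_nonneg_right hEsum (mul_nonneg hs0 hs0))
      have hre : -((cA / 2) * (s * s)) ≤ (star u ⬝ᵥ (A y - Ainf) *ᵥ u).re := by
        have := (Complex.abs_re_le_norm (star u ⬝ᵥ (A y - Ainf) *ᵥ u)).trans hE2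
        have := abs_le.mp this
        linarith [this.1]
      have hAinf' : cA * (s * s) ≤ (star u ⬝ᵥ Ainf *ᵥ u).re := hcoA u
      rw [hsplit, Complex.add_re]
      linarith
    -- cross term lower bound
    have hwre : -(be * (s * t)) ≤ w.re := by
      have h1' : ‖w‖ ≤ be * (s * t) := by
        have := abs_star_dotProduct_mulVec_le (B y) u v
        calc ‖w‖ ≤ (∑ i, ∑ j, ‖B y i j‖) * (s * t) := this
        _ ≤ be * (s * t) := mul_le_mul_of_nonneg_right (hBsum y) (mul_nonneg hs0 ht0)
      have := abs_le.mp ((Complex.abs_re_le_norm w).trans h1')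
      linarith [this.1]
    -- D-term lower bound
    have hDterm : 2 * cQ * y * (t * t) - kP * (t * t) - 1 * (t * t)
        ≤ (star v ⬝ᵥ (D y) *ᵥ v).re := by
      have hsplit : star v ⬝ᵥ (D y) *ᵥ v
          = ((2 * y : ℝ) : ℂ) * (star v ⬝ᵥ Q *ᵥ v) + star v ⬝ᵥ P *ᵥ v
            + star v ⬝ᵥ (H y) *ᵥ v := by
        rw [hD y, Matrix.add_mulVec, Matrix.add_mulVec, dotProduct_add,
          dotProduct_add, Matrix.smul_mulVec, dotProduct_smul]
        simp [smul_eq_mul]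
      have hQ' : cQ * (t * t) ≤ (star v ⬝ᵥ Q *ᵥ v).re := hcoQ v
      have hQre : 2 * y * (cQ * (t * t)) ≤ (((2 * y : ℝ) : ℂ) * (star v ⬝ᵥ Q *ᵥ v)).re := by
        rw [Complex.re_ofReal_mul]
        apply mul_le_mul_of_nonneg_left hQ'
        linarith
      have hPre : -(kP * (t * t)) ≤ (star v ⬝ᵥ P *ᵥ v).re := by
        have h1' : ‖star v ⬝ᵥ P *ᵥ v‖ ≤ kP * (t * t) :=
          (abs_star_dotProduct_mulVec_le P v v)
        have := abs_le.mp ((Complex.abs_re_le_norm _).trans h1')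
        linarith [this.1]
      have hHre : -(1 * (t * t)) ≤ (star v ⬝ᵥ (H y) *ᵥ v).re := by
        have h1' : ‖star v ⬝ᵥ (H y) *ᵥ v‖
            ≤ (∑ i, ∑ j, ‖H y i j‖) * (t * t) :=
          abs_star_dotProduct_mulVec_le _ v v
        have h2' : ‖star v ⬝ᵥ (H y) *ᵥ v‖ ≤ 1 * (t * t) :=
          h1'.trans (mul_le_mul_of_nonneg_right h2.le (mul_nonneg ht0 ht0))
        have := abs_le.mp ((Complex.abs_re_le_norm _).trans h2')
        linarith [this.1]
      rw [hsplit, Complex.add_re, Complex.add_re]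
      nlinarith
    -- nonzero norms
    have hst : 0 < s ∨ 0 < t := by
      by_contra hcon
      push_neg at hcon
      have hs' : s = 0 := le_antisymm hcon.1 hs0
      have ht' : t = 0 := le_antisymm hcon.2 ht0
      have hu0 : u = 0 := norm_eq_zero.mp hs'
      have hv0 : v = 0 := norm_eq_zero.mp ht'
      apply hz
      rw [← hzelim, hu0, hv0]
      funext i; cases i <;> rfl
    -- final positivity
    have hgam : be ^ 2 < (cA / 2) * (2 * cQ * y - kP - 1) := by
      have h3' : (2 * be ^ 2 + 2) / cA ≤ 2 * cQ * y - kP - 1 := by linarith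
      have : (cA / 2) * ((2 * be ^ 2 + 2) / cA) = be ^ 2 + 1 := by
        field_simp
      nlinarith
    have hpos : 0 < (cA / 2) * (s * s) - 2 * be * (s * t)
        + (2 * cQ * y - kP - 1) * (t * t) :=
      quad_pos_aux (cA / 2) be (2 * cQ * y - kP - 1) s t (by positivity) hbe0 hs0 ht0 hgam hst
    rw [Complex.lt_def]
    constructor
    · rw [hqre]
      simp only [Complex.zero_re]
      nlinarith
    · rw [herm_quad_im_zero hMherm z]
      simp
  exact Filter.eventually_atTop.mp hfinal
end

section
/- Let m ≥ 1 and h ≥ 0 be integers and set M := 2m + 2h + 2. Fix a matrix x = (x_{ki}) ∈ M_m(ℂ) and r > 0. Let A_p^i, C_p^i (1 ≤ p ≤ h+1, 1 ≤ i ≤ m), B_p^i (1 ≤ p ≤ h+1, 1 ≤ i ≤ 2h+2), D_q^i, F_q^i (1 ≤ q ≤ m, 1 ≤ i ≤ m), and E_q^i (1 ≤ q ≤ m, 1 ≤ i ≤ 2h+2) be functions analytic on the open ball of radius r about 0 in ℂ, with A_p^i(0) = C_p^i(0) = D_q^i(0) = E_q^i(0) = 0, F_q^i(0) = δ_q^i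 (Kronecker delta), and B_p^i(0) =: b_p^i. Assume the (2h+2)×(2h+2) matrix whose first h+1 rows are (b_p^i)_{i} (p = 1,…,h+1) and whose last h+1 rows are (conj b_p^i)_{i} is invertible. Set y₀ := max(0, −(log r)/(2π)) and, for z with Im z > y₀ and t := e^{2πiz}, define vectors in ℂ^M = ℂ^m × ℂ^{2h+2} × ℂ^m: u'_p(z) := ( (A_p^i(t) − Σ_{k=1}^m C_p^k(t)·x_{ki} + z·C_p^i(t))_{i≤m}, (B_p^i(t))_{i≤2h+2}, (C_p^i(t))_{i≤m} ) and v'_q(z) := ( (D_q^i(t) − Σ_{k=1}^m F_q^k(t)·x_{ki} + z·F_q^i(t))_{i≤m}, (E_q^i(t))_{i≤2h+2}, (F_q^i(t))_{i≤m} ). Then there exists Y > y₀ such that for every z with Re z ∈ [0,1] and Im z ≥ Y, the M vectors u'_1(z), …, u'_{h+1}(z), v'_1(z), …, v'_m(z), conj u'_1(z), …, conj u'_{h+1}(z), conj v'_1(z), …, conj v'_m(z) are linearly independent over ℂ (hence form a basis of ℂ^M). -/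
open Filter Complex Topology

private lemma tendsto_texp :
    Tendsto (fun z : ℂ => Complex.exp (2 * Real.pi * Complex.I * z))
      (Filter.comap Complex.im Filter.atTop) (𝓝 0) := by
  have him : Tendsto Complex.im (Filter.comap Complex.im Filter.atTop) atTop := tendsto_comap
  rw [tendsto_zero_iff_norm_tendsto_zero]
  have key : ∀ z : ℂ, ‖Complex.exp (2 * Real.pi * Complex.I * z)‖
      = Real.exp (-(2 * Real.pi * z.im)) := by
    intro z
    rw [Complex.norm_exp]
    congr 1
    simp [Complex.mul_re, Complex.mul_im]
  simp only [key]
  refine Real.tendsto_exp_atBot.comp ?_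
  refine tendsto_neg_atBot_iff.mpr ?_
  exact Tendsto.const_mul_atTop (by positivity) him

private lemma tendsto_sfun :
    Tendsto (fun z : ℂ => (z - (starRingEnd ℂ) z)⁻¹)
      (Filter.comap Complex.im Filter.atTop) (𝓝 0) := by
  have him : Tendsto Complex.im (Filter.comap Complex.im Filter.atTop) atTop := tendsto_comap
  rw [tendsto_zero_iff_norm_tendsto_zero]
  have key : ∀ z : ℂ, ‖(z - (starRingEnd ℂ) z)⁻¹‖ = (2 * |z.im|)⁻¹ := by
    intro z
    rw [norm_inv, Complex.sub_conj]
    simp [map_mul, Complex.norm_I, Complex.norm_real, abs_mul]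
  simp only [key]
  refine Tendsto.inv_tendsto_atTop ?_
  exact Tendsto.const_mul_atTop (by norm_num) (tendsto_abs_atTop_atTop.comp him)


private noncomputable def famL (m h : ℕ) (z : ℂ) :
    ((Fin m → ℂ) × (Fin (2 * h + 2) → ℂ) × (Fin m → ℂ)) →ₗ[ℂ]
      ((Fin m → ℂ) × (Fin (2 * h + 2) → ℂ) × (Fin m → ℂ)) where
  toFun v := ((fun i => (z - (starRingEnd ℂ) z)⁻¹ * (v.1 i - (starRingEnd ℂ) z * v.2.2 i)),
    v.2.1, v.2.2)
  map_add' v w := by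
    refine Prod.ext ?_ (Prod.ext rfl rfl)
    funext i
    simp
    ring
  map_smul' c v := by
    refine Prod.ext ?_ (Prod.ext rfl rfl)
    funext i
    simp [smul_eq_mul]
    ring

private def gLim (m h : ℕ) (b : Fin (h + 1) → Fin (2 * h + 2) → ℂ) :
    ((Fin (h + 1) ⊕ Fin m) ⊕ (Fin (h + 1) ⊕ Fin m)) →
      (Fin m → ℂ) × (Fin (2 * h + 2) → ℂ) × (Fin m → ℂ) :=
  Sum.elim
    (Sum.elim (fun p => (0, b p, 0))
      (fun q => ((fun i => if q = i then 1 else 0), 0, fun i => if q = i then 1 else 0)))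
    (Sum.elim (fun p => (0, fun i => (starRingEnd ℂ) (b p i), 0))
      (fun q => (0, 0, fun i => if q = i then 1 else 0)))

private lemma gLim_li (m h : ℕ) (b : Fin (h + 1) → Fin (2 * h + 2) → ℂ)
    (hb : LinearIndependent ℂ
      (Sum.elim b (fun p => fun i => (starRingEnd ℂ) (b p i)) :
        Fin (h + 1) ⊕ Fin (h + 1) → (Fin (2 * h + 2) → ℂ))) :
    LinearIndependent ℂ (gLim m h b) := by
  rw [Fintype.linearIndependent_iff]
  intro c hc
  have h1 := congrArg Prod.fst hc
  have h2 := congrArg (fun v => v.2.1) hc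
  have h3 := congrArg (fun v => v.2.2) hc
  simp only [Fintype.sum_sum_type, Prod.fst_add, Prod.snd_add, Prod.fst_sum, Prod.snd_sum, Prod.smul_fst, Prod.smul_snd,
    gLim, Sum.elim_inl, Sum.elim_inr, smul_zero, Finset.sum_const_zero, add_zero, zero_add] at h1 h2 h3
  -- extract β coefficients
  have hβ : ∀ q : Fin m, c (Sum.inl (Sum.inr q)) = 0 := by
    intro q
    have := congrFun h1 q
    simpa [Finset.sum_apply, mul_ite] using this
  have hβ' : ∀ q : Fin m, c (Sum.inr (Sum.inr q)) = 0 := by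
    intro q
    have := congrFun h3 q
    simpa [Finset.sum_apply, mul_ite, hβ] using this
  have hα : ∀ p : Fin (h + 1), c (Sum.inl (Sum.inl p)) = 0 ∧ c (Sum.inr (Sum.inl p)) = 0 := by
    have key := Fintype.linearIndependent_iff.mp hb
      (Sum.elim (fun p => c (Sum.inl (Sum.inl p))) (fun p => c (Sum.inr (Sum.inl p))))
    have hsum : ∑ j : Fin (h + 1) ⊕ Fin (h + 1),
        (Sum.elim (fun p => c (Sum.inl (Sum.inl p))) (fun p => c (Sum.inr (Sum.inl p)))) j •
          (Sum.elim b (fun p => fun i => (starRingEnd ℂ) (b p i)) :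
            Fin (h + 1) ⊕ Fin (h + 1) → (Fin (2 * h + 2) → ℂ)) j = 0 := by
      rw [Fintype.sum_sum_type]
      simpa using h2
    intro p
    exact ⟨key hsum (Sum.inl p), key hsum (Sum.inr p)⟩
  intro j
  rcases j with (p | q) | (p | q)
  · exact (hα p).1
  · exact hβ q
  · exact (hα p).2
  · exact hβ' q

/-- the twisted frame `u'_p(z), v'_q(z)` of the Hodge bundle together with its
entrywise complex conjugate forms a basis of `ℂ^M = ℂ^m × ℂ^{2h+2} × ℂ^m` for
`Re z ∈ [0,1]` and `Im z` sufficiently large. -/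
theorem twisted_frame_and_conjugate_eventually_independent
    (m h : ℕ) (hm : 1 ≤ m)
    (x : Matrix (Fin m) (Fin m) ℂ) (r : ℝ) (hr : 0 < r)
    (A C : Fin (h + 1) → Fin m → ℂ → ℂ)
    (B : Fin (h + 1) → Fin (2 * h + 2) → ℂ → ℂ)
    (D F : Fin m → Fin m → ℂ → ℂ)
    (E : Fin m → Fin (2 * h + 2) → ℂ → ℂ)
    (hAan : ∀ p i, AnalyticOnNhd ℂ (A p i) (Metric.ball 0 r))
    (hBan : ∀ p i, AnalyticOnNhd ℂ (B p i) (Metric.ball 0 r))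
    (hCan : ∀ p i, AnalyticOnNhd ℂ (C p i) (Metric.ball 0 r))
    (hDan : ∀ q i, AnalyticOnNhd ℂ (D q i) (Metric.ball 0 r))
    (hEan : ∀ q i, AnalyticOnNhd ℂ (E q i) (Metric.ball 0 r))
    (hFan : ∀ q i, AnalyticOnNhd ℂ (F q i) (Metric.ball 0 r))
    (hA0 : ∀ p i, A p i 0 = 0) (hC0 : ∀ p i, C p i 0 = 0)
    (hD0 : ∀ q i, D q i 0 = 0) (hE0 : ∀ q i, E q i 0 = 0)
    (hF0 : ∀ q i, F q i 0 = if q = i then 1 else 0)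
    (hb : LinearIndependent ℂ
      (Sum.elim (fun p : Fin (h + 1) => fun i => B p i 0)
        (fun p : Fin (h + 1) => fun i => starRingEnd ℂ (B p i 0)) :
        Fin (h + 1) ⊕ Fin (h + 1) → (Fin (2 * h + 2) → ℂ)))
    (y₀ : ℝ) (hy₀ : y₀ = max 0 (-(Real.log r) / (2 * Real.pi)))
    (u' : ℂ → Fin (h + 1) → (Fin m → ℂ) × (Fin (2 * h + 2) → ℂ) × (Fin m → ℂ))
    (v' : ℂ → Fin m → (Fin m → ℂ) × (Fin (2 * h + 2) → ℂ) × (Fin m → ℂ))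
    (hu' : ∀ (z : ℂ) (p : Fin (h + 1)), u' z p =
      ((fun i => A p i (Complex.exp (2 * Real.pi * Complex.I * z)) -
          (∑ k, C p k (Complex.exp (2 * Real.pi * Complex.I * z)) * x k i) +
          z * C p i (Complex.exp (2 * Real.pi * Complex.I * z))),
       (fun i => B p i (Complex.exp (2 * Real.pi * Complex.I * z))),
       (fun i => C p i (Complex.exp (2 * Real.pi * Complex.I * z)))))
    (hv' : ∀ (z : ℂ) (q : Fin m), v' z q =
      ((fun i => D q i (Complex.exp (2 * Real.pi * Complex.I * z)) -
          (∑ k, F q k (Complex.exp (2 * Real.pi * Complex.I * z)) * x k i) +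
          z * F q i (Complex.exp (2 * Real.pi * Complex.I * z))),
       (fun i => E q i (Complex.exp (2 * Real.pi * Complex.I * z))),
       (fun i => F q i (Complex.exp (2 * Real.pi * Complex.I * z))))) :
    ∃ Y : ℝ, y₀ < Y ∧ ∀ z : ℂ, 0 ≤ z.re → z.re ≤ 1 → Y ≤ z.im →
      LinearIndependent ℂ
        (Sum.elim (Sum.elim (u' z) (v' z))
          (Sum.elim (fun p => star (u' z p)) (fun q => star (v' z q))) :
          (Fin (h + 1) ⊕ Fin m) ⊕ (Fin (h + 1) ⊕ Fin m) →
            (Fin m → ℂ) × (Fin (2 * h + 2) → ℂ) × (Fin m → ℂ)) := by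
  
  classical
  have him : Tendsto Complex.im (Filter.comap Complex.im Filter.atTop) atTop := tendsto_comap
  have h_t : Tendsto (fun z : ℂ => Complex.exp (2 * Real.pi * Complex.I * z))
      (Filter.comap Complex.im Filter.atTop) (𝓝 0) := tendsto_texp
  have h_s : Tendsto (fun z : ℂ => (z - (starRingEnd ℂ) z)⁻¹)
      (Filter.comap Complex.im Filter.atTop) (𝓝 0) := tendsto_sfun
  have h_s1 : Tendsto (fun z : ℂ => (z - (starRingEnd ℂ) z)⁻¹ * (z - (starRingEnd ℂ) z))
      (Filter.comap Complex.im Filter.atTop) (𝓝 1) := by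
    have hev : (fun _ : ℂ => (1 : ℂ)) =ᶠ[Filter.comap Complex.im Filter.atTop]
        (fun z : ℂ => (z - (starRingEnd ℂ) z)⁻¹ * (z - (starRingEnd ℂ) z)) := by
      filter_upwards [him.eventually_ge_atTop 1] with z hz
      rw [eq_comm, inv_mul_cancel₀]
      rw [Complex.sub_conj]
      simp only [ne_eq, mul_eq_zero, Complex.I_ne_zero, or_false, Complex.ofReal_eq_zero]
      intro hc
      norm_num at hc
      linarith
    exact tendsto_const_nhds.congr' hev
  have hcont : ∀ g : ℂ → ℂ, AnalyticOnNhd ℂ g (Metric.ball 0 r) →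
      Tendsto (fun z : ℂ => g (Complex.exp (2 * Real.pi * Complex.I * z)))
        (Filter.comap Complex.im Filter.atTop) (𝓝 (g 0)) := fun g hg =>
    ((hg 0 (Metric.mem_ball_self hr)).continuousAt.tendsto).comp h_t
  have hconj : ∀ (g : ℂ → ℂ) (v : ℂ), Tendsto g (Filter.comap Complex.im Filter.atTop) (𝓝 v) →
      Tendsto (fun z => (starRingEnd ℂ) (g z)) (Filter.comap Complex.im Filter.atTop)
        (𝓝 ((starRingEnd ℂ) v)) := fun g v hg =>
    ((Complex.continuous_conj.tendsto v)).comp hg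
  -- the family after applying the linear map famL
  have hfam : Tendsto (fun z => ⇑(famL m h z) ∘
        (Sum.elim (Sum.elim (u' z) (v' z))
          (Sum.elim (fun p => star (u' z p)) (fun q => star (v' z q)))))
      (Filter.comap Complex.im Filter.atTop) (𝓝 (gLim m h (fun p i => B p i 0))) := by
    rw [tendsto_pi_nhds]
    intro j
    rcases j with (p | q) | (p | q)
    · -- u' p  →  (0, b p, 0)
      simp only [Function.comp_apply, Sum.elim_inl, hu', famL, gLim, LinearMap.coe_mk,
        AddHom.coe_mk]
      refine Tendsto.prodMk_nhds ?_ (Tendsto.prodMk_nhds ?_ ?_)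
      · rw [tendsto_pi_nhds]; intro i
        have hP : Tendsto (fun z : ℂ => A p i (Complex.exp (2 * Real.pi * Complex.I * z)) -
            ∑ k, C p k (Complex.exp (2 * Real.pi * Complex.I * z)) * x k i)
            (Filter.comap Complex.im Filter.atTop) (𝓝 0) := by
          have := (hcont _ (hAan p i)).sub (tendsto_finset_sum Finset.univ
            (fun k _ => (hcont _ (hCan p k)).mul_const (x k i)))
          simpa [hA0, hC0] using this
        have hC' : Tendsto (fun z : ℂ => C p i (Complex.exp (2 * Real.pi * Complex.I * z)))
            (Filter.comap Complex.im Filter.atTop) (𝓝 0) := by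
          simpa [hC0] using hcont _ (hCan p i)
        have key := (h_s.mul hP).add (h_s1.mul hC')
        simp only [Pi.zero_apply]
        refine Tendsto.congr (fun z => ?_) (by simpa using key)
        ring
      · rw [tendsto_pi_nhds]; intro i
        exact hcont _ (hBan p i)
      · rw [tendsto_pi_nhds]; intro i
        simpa [hC0] using hcont _ (hCan p i)
    · -- v' q  →  (e q, 0, e q)
      simp only [Function.comp_apply, Sum.elim_inl, Sum.elim_inr, hv', famL, gLim,
        LinearMap.coe_mk, AddHom.coe_mk]
      refine Tendsto.prodMk_nhds ?_ (Tendsto.prodMk_nhds ?_ ?_)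
      · rw [tendsto_pi_nhds]; intro i
        have hP := (hcont _ (hDan q i)).sub (tendsto_finset_sum Finset.univ
          (fun k _ => (hcont _ (hFan q k)).mul_const (x k i)))
        have hF' := hcont _ (hFan q i)
        have key := (h_s.mul hP).add (h_s1.mul hF')
        refine Tendsto.congr (fun z => ?_) (by simpa [hF0] using key)
        ring
      · rw [tendsto_pi_nhds]; intro i
        simpa [hE0] using hcont _ (hEan q i)
      · rw [tendsto_pi_nhds]; intro i
        simpa [hF0] using hcont _ (hFan q i)
    · -- star (u' p)  →  (0, conj (b p), 0)
      simp only [Function.comp_apply, Sum.elim_inl, Sum.elim_inr, hu', famL, gLim,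
        LinearMap.coe_mk, AddHom.coe_mk, Prod.star_def, Pi.star_def, Complex.star_def]
      refine Tendsto.prodMk_nhds ?_ (Tendsto.prodMk_nhds ?_ ?_)
      · rw [tendsto_pi_nhds]; intro i
        have hP : Tendsto (fun z : ℂ => A p i (Complex.exp (2 * Real.pi * Complex.I * z)) -
            ∑ k, C p k (Complex.exp (2 * Real.pi * Complex.I * z)) * x k i)
            (Filter.comap Complex.im Filter.atTop) (𝓝 0) := by
          have := (hcont _ (hAan p i)).sub (tendsto_finset_sum Finset.univ
            (fun k _ => (hcont _ (hCan p k)).mul_const (x k i)))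
          simpa [hA0, hC0] using this
        have key := h_s.mul (hconj _ _ hP)
        simp only [Pi.zero_apply]
        refine Tendsto.congr (fun z => ?_) (by simpa using key)
        simp only [map_add, map_sub, map_mul, map_sum]
        ring
      · rw [tendsto_pi_nhds]; intro i
        exact hconj _ _ (hcont _ (hBan p i))
      · rw [tendsto_pi_nhds]; intro i
        simpa [hC0] using hconj _ _ (hcont _ (hCan p i))
    · -- star (v' q)  →  (0, 0, e q)
      simp only [Function.comp_apply, Sum.elim_inr, hv', famL, gLim,
        LinearMap.coe_mk, AddHom.coe_mk, Prod.star_def, Pi.star_def, Complex.star_def]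
      refine Tendsto.prodMk_nhds ?_ (Tendsto.prodMk_nhds ?_ ?_)
      · rw [tendsto_pi_nhds]; intro i
        have hP := (hcont _ (hDan q i)).sub (tendsto_finset_sum Finset.univ
          (fun k _ => (hcont _ (hFan q k)).mul_const (x k i)))
        have key := h_s.mul (hconj _ _ hP)
        simp only [Pi.zero_apply]
        refine Tendsto.congr (fun z => ?_) (by simpa using key)
        simp only [map_add, map_sub, map_mul, map_sum]
        ring
      · rw [tendsto_pi_nhds]; intro i
        simpa [hE0] using hconj _ _ (hcont _ (hEan q i))
      · rw [tendsto_pi_nhds]; intro i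
        have := hconj _ _ (hcont _ (hFan q i))
        rw [hF0] at this
        simpa [apply_ite] using this
  -- gLim is linearly independent
  have hg₀ : LinearIndependent ℂ (gLim m h (fun p i => B p i 0)) :=
    gLim_li m h _ hb
  -- eventually the transformed family is linearly independent
  have hev : ∀ᶠ z in Filter.comap Complex.im Filter.atTop,
      LinearIndependent ℂ (⇑(famL m h z) ∘
        (Sum.elim (Sum.elim (u' z) (v' z))
          (Sum.elim (fun p => star (u' z p)) (fun q => star (v' z q))))) :=
    hfam (isOpen_setOf_linearIndependent.mem_nhds hg₀)
  rw [Filter.eventually_comap] at hev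
  rw [Filter.eventually_atTop] at hev
  obtain ⟨Y', hY'⟩ := hev
  refine ⟨max Y' y₀ + 1, by linarith [le_max_right Y' y₀], ?_⟩
  intro z hre0 hre1 hzim
  have hz : LinearIndependent ℂ (⇑(famL m h z) ∘
      (Sum.elim (Sum.elim (u' z) (v' z))
        (Sum.elim (fun p => star (u' z p)) (fun q => star (v' z q))))) :=
    hY' z.im (by linarith [le_max_left Y' y₀]) z rfl
  exact LinearIndependent.of_comp (famL m h z) hz
end
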